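/- arXiv:2007.07808 — 3 statements merged into one kernel-verified Lean document; each statement's English description precedes it below -/
import Mathlib

section
/- Let N₀ be the five-node network described below, equipped with the everlasting constant network inflow rate u_s(θ) = 2 for all θ ≥ 0 at node s and zero inflow at all other nodes. Then every instantaneous dynamic equilibrium (IDE) flow in this network satisfies, for every integer k ≥ 1: q_vt(4k + 2^{−k}) = 1 − 2^{−k}, q_wx(4k + 2^{−k}) = 2 − 2^{−k}, q_vt(4k + 2^{−k} + 2) = 3 − 2^{−k}, and q_wx(4k + 2) = 0. -/
open MeasureTheory Set

/-- A walk in a directed graph given by `tail`/`head` maps: `IsWalk tail head v w L`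
means the list of edges `L` forms a walk from `v` to `w`. -/
def IsWalk {V E : Type} (tail head : E → V) : V → V → List E → Prop
  | v, w, [] => v = w
  | v, w, e :: L => tail e = v ∧ IsWalk tail head (head e) w L

/-- A right-constant step function with finitely many jump points. -/
def RightConstantStep (g : ℝ → ℝ) : Prop :=
  ∃ s : Finset ℝ, ∀ x y : ℝ, x ≤ y → (∀ p ∈ s, ¬ (x < p ∧ p ≤ y)) → g x = g y

/-- A single-sink network: a finite directed graph with positive rational capacities
and travel times, a sink reachable from every node, and nonnegative rational-valued
right-constant step network inflow rates (zero at the sink and for negative times). -/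
structure Network (V E : Type) [Fintype V] [DecidableEq V] [Fintype E] [DecidableEq E] where
  tail : E → V
  head : E → V
  cap : E → ℝ
  time : E → ℝ
  sink : V
  u : V → ℝ → ℝ
  cap_pos : ∀ e, 0 < cap e
  cap_rat : ∀ e, ∃ q : ℚ, cap e = (q : ℝ)
  time_pos : ∀ e, 0 < time e
  time_rat : ∀ e, ∃ q : ℚ, time e = (q : ℝ)
  reach : ∀ v, ∃ L : List E, IsWalk tail head v sink L
  u_nonneg : ∀ v θ, 0 ≤ u v θ
  u_rat : ∀ v θ, ∃ q : ℚ, u v θ = (q : ℝ)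
  u_sink : ∀ θ, u sink θ = 0
  u_neg : ∀ v θ, θ < 0 → u v θ = 0
  u_step : ∀ v, RightConstantStep (u v)

variable {V E : Type} [Fintype V] [DecidableEq V] [Fintype E] [DecidableEq E]

/-- The edges leaving a node `v`, i.e. `δ⁺(v)`. -/
def Network.outEdges (N : Network V E) (v : V) : Finset E :=
  Finset.univ.filter (fun e => N.tail e = v)

/-- The edges entering a node `v`, i.e. `δ⁻(v)`. -/
def Network.inEdges (N : Network V E) (v : V) : Finset E :=
  Finset.univ.filter (fun e => N.head e = v)

/-- `τ_min`, the minimal travel time of an edge. -/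
noncomputable def Network.tauMin (N : Network V E) : ℝ := sInf (Set.range N.time)

/-- `max_ζ u_v(ζ)`, the maximal network inflow rate at `v`. -/
noncomputable def Network.uMax (N : Network V E) (v : V) : ℝ := ⨆ θ : ℝ, N.u v θ

/-- The maximal out-degree `Δ` of the network. -/
def Network.maxOutDeg (N : Network V E) : ℕ :=
  Finset.univ.sup (fun v => (N.outEdges v).card)

/-- All network inflow rates have bounded support. -/
def Network.BddInflow (N : Network V E) : Prop :=
  ∀ v, ∃ B : ℝ, ∀ θ, B ≤ θ → N.u v θ = 0

/-- The directed graph of the network is acyclic. -/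
def Network.Acyclic (N : Network V E) : Prop :=
  ∀ (v : V) (L : List E), L ≠ [] → ¬ IsWalk N.tail N.head v v L

/-- A flow over time: locally integrable nonnegative edge in- and outflow rates. -/
structure FlowOverTime (N : Network V E) where
  fplus : E → ℝ → ℝ
  fminus : E → ℝ → ℝ
  fplus_nonneg : ∀ e θ, 0 ≤ fplus e θ
  fminus_nonneg : ∀ e θ, 0 ≤ fminus e θ
  fplus_int : ∀ e θ, IntervalIntegrable (fplus e) volume 0 θ
  fminus_int : ∀ e θ, IntervalIntegrable (fminus e) volume 0 θ

/-- The queue length `q_e(θ) = F⁺_e(θ) − F⁻_e(θ + τ_e)`. -/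
noncomputable def queueOf (N : Network V E) (fplus fminus : E → ℝ → ℝ) (e : E) (θ : ℝ) : ℝ :=
  (∫ ζ in (0:ℝ)..θ, fplus e ζ) - ∫ ζ in (0:ℝ)..(θ + N.time e), fminus e ζ

/-- The instantaneous travel time `c_e(θ) = τ_e + q_e(θ)/ν_e`. -/
noncomputable def ctimeOf (N : Network V E) (fplus fminus : E → ℝ → ℝ) (e : E) (θ : ℝ) : ℝ :=
  N.time e + queueOf N fplus fminus e θ / N.cap e

/-- The node label `ℓ_v(θ)`: the shortest instantaneous travel time from `v` to the sink. -/
noncomputable def labelOf (N : Network V E) (fplus fminus : E → ℝ → ℝ) (v : V) (θ : ℝ) : ℝ :=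
  sInf { r : ℝ | ∃ L : List E, IsWalk N.tail N.head v N.sink L ∧
                  r = (L.map (fun e => ctimeOf N fplus fminus e θ)).sum }

/-- Edge `e` is active at time `θ`: `ℓ_{tail e}(θ) = c_e(θ) + ℓ_{head e}(θ)`. -/
def ActiveOf (N : Network V E) (fplus fminus : E → ℝ → ℝ) (e : E) (θ : ℝ) : Prop :=
  labelOf N fplus fminus (N.tail e) θ =
    ctimeOf N fplus fminus e θ + labelOf N fplus fminus (N.head e) θ

/-- Feasibility of a flow over time: flow conservation (i)/(ii), no outflow before `τ_e`
(iii), and queues operating at capacity (iv). -/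
def Feasible (N : Network V E) (f : FlowOverTime N) : Prop :=
  (∀ v, v ≠ N.sink → ∀ θ : ℝ, 0 ≤ θ →
      (∑ e ∈ N.outEdges v, f.fplus e θ) - (∑ e ∈ N.inEdges v, f.fminus e θ) = N.u v θ) ∧
  (∀ θ : ℝ, 0 ≤ θ →
      (∑ e ∈ N.outEdges N.sink, f.fplus e θ) - (∑ e ∈ N.inEdges N.sink, f.fminus e θ) ≤ 0) ∧
  (∀ e, ∀ θ : ℝ, 0 ≤ θ → θ < N.time e → f.fminus e θ = 0) ∧
  (∀ e, ∀ θ : ℝ, 0 ≤ θ →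
      f.fminus e (θ + N.time e) =
        if 0 < queueOf N f.fplus f.fminus e θ then N.cap e
        else min (f.fplus e θ) (N.cap e))

/-- An instantaneous dynamic equilibrium: a feasible flow that only sends flow
into currently active edges. -/
def IsIDE (N : Network V E) (f : FlowOverTime N) : Prop :=
  Feasible N f ∧
  ∀ e, ∀ θ : ℝ, 0 ≤ θ → 0 < f.fplus e θ → ActiveOf N f.fplus f.fminus e θ

/-- `g` is almost everywhere constant on the set `S`. -/
def AEConstOn (g : ℝ → ℝ) (S : Set ℝ) : Prop :=
  ∃ c : ℝ, ∀ᵐ θ ∂(volume.restrict S), g θ = c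

/-- The `i`-th segment of the partition `0 = t 0 < t 1 < ⋯ < t n < ∞`. -/
def phaseSeg (n : ℕ) (t : ℕ → ℝ) (i : ℕ) : Set ℝ :=
  if i < n then Set.Ioo (t i) (t (i+1)) else Set.Ioi (t n)

/-- `ℝ≥0` splits (up to finitely many points) into the `n+1` intervals given by
`t`, on each of which all edge in- and outflow rates are a.e. constant; i.e. the
flow has at most `n+1` phases. -/
def PhasePartition (N : Network V E) (f : FlowOverTime N) (n : ℕ) (t : ℕ → ℝ) : Prop :=
  t 0 = 0 ∧ (∀ i, i < n → t i < t (i+1)) ∧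
  ∀ i, i ≤ n → ∀ e, AEConstOn (f.fplus e) (phaseSeg n t i) ∧ AEConstOn (f.fminus e) (phaseSeg n t i)

/-! The queues on `sv`, `sw` and `xt` never build up, so an IDE routes the whole inflow `2`
along `s v t` while `q_vt < 1 + q_wx` and along `s w x t` while `q_vt > 1 + q_wx`. One time
unit later, `vt` and `wx` then gain (inflow `2`) or lose (inflow `0`) queue at rate `1`.
Following these piecewise linear dynamics, the state `q_vt = 1 - ε`, `q_wx = 2 - ε`, entered
after a unit of time in which everything went to `sv`, recurs `4 - ε/2` time units later
with `ε` halved; it is first reached at time `4.5` with `ε = 1/2`. -/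

lemma nonpos_of_nonincreasing_while_pos {q : ℝ → ℝ} {a b : ℝ} (hq : ContinuousOn q (Icc a b))
    (ha : q a ≤ 0)
    (hstep : ∀ θ₁ θ₂, a ≤ θ₁ → θ₁ ≤ θ₂ → θ₂ ≤ b → (∀ ζ ∈ Ioo θ₁ θ₂, 0 < q ζ) → q θ₂ ≤ q θ₁) :
    ∀ θ ∈ Icc a b, q θ ≤ 0 := by
  intro θ hθ
  by_contra! hpos
  -- the last time `z ≤ θ` at which `q` is nonpositive
  set Z := Icc a θ ∩ q ⁻¹' Iic 0
  have hZ : IsClosed Z :=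
    (hq.mono (Icc_subset_Icc_right hθ.2)).preimage_isClosed_of_isClosed isClosed_Icc isClosed_Iic
  have hZne : Z.Nonempty := ⟨a, ⟨le_rfl, hθ.1⟩, ha⟩
  have hZbdd : BddAbove Z := ⟨θ, fun x hx => hx.1.2⟩
  obtain ⟨⟨haz, hzθ⟩, hqz⟩ := hZ.csSup_mem hZne hZbdd
  have hafter : ∀ ζ ∈ Ioo (sSup Z) θ, 0 < q ζ := fun ζ hζ => by
    by_contra! hζq
    exact (le_csSup hZbdd ⟨⟨haz.trans hζ.1.le, hζ.2.le⟩, hζq⟩).not_gt hζ.1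
  linarith [hstep _ θ haz hzθ hθ.2 hafter, show q (sSup Z) ≤ 0 from hqz]

namespace FlowOverTime

variable {N : Network V E} (f : FlowOverTime N)

lemma intervalIntegrable_fplus (e : E) (a b : ℝ) : IntervalIntegrable (f.fplus e) volume a b :=
  (f.fplus_int e a).symm.trans (f.fplus_int e b)

lemma intervalIntegrable_fminus (e : E) (a b : ℝ) : IntervalIntegrable (f.fminus e) volume a b :=
  (f.fminus_int e a).symm.trans (f.fminus_int e b)

lemma intervalIntegrable_fminus_comp_add_right (e : E) (c a b : ℝ) :
    IntervalIntegrable (fun ζ => f.fminus e (ζ + c)) volume a b := by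
  simpa using (f.intervalIntegrable_fminus e (a + c) (b + c)).comp_add_right c

lemma continuous_queueOf (e : E) : Continuous (queueOf N f.fplus f.fminus e) :=
  (intervalIntegral.continuous_primitive (f.intervalIntegrable_fplus e) 0).sub
    ((intervalIntegral.continuous_primitive (f.intervalIntegrable_fminus e) 0).comp
      (continuous_add_const _))

lemma queueOf_sub_queueOf (e : E) (θ₁ θ₂ : ℝ) :
    queueOf N f.fplus f.fminus e θ₂ - queueOf N f.fplus f.fminus e θ₁ =
      (∫ ζ in θ₁..θ₂, f.fplus e ζ) - ∫ ζ in θ₁ + N.time e..θ₂ + N.time e, f.fminus e ζ := by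
  simp only [queueOf]
  rw [← intervalIntegral.integral_interval_sub_left (f.intervalIntegrable_fplus e 0 θ₂)
      (f.intervalIntegrable_fplus e 0 θ₁),
    ← intervalIntegral.integral_interval_sub_left (f.intervalIntegrable_fminus e _ _)
      (f.intervalIntegrable_fminus e 0 (θ₁ + N.time e))]
  ring

end FlowOverTime

namespace Feasible

variable {N : Network V E} {f : FlowOverTime N} {e : E}

lemma queueOf_zero (hf : Feasible N f) (e : E) : queueOf N f.fplus f.fminus e 0 = 0 := by
  have hout : ∫ ζ in (0:ℝ)..N.time e, f.fminus e ζ = ∫ _ in (0:ℝ)..N.time e, 0 :=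
    intervalIntegral.integral_congr_Ioo_of_le (by linarith [N.time_pos e])
      fun ζ hζ => hf.2.2.1 e ζ hζ.1.le (by linarith [hζ.2])
  simp [queueOf, hout]

lemma fminus_le_cap (hf : Feasible N f) {θ : ℝ} (hθ : 0 ≤ θ) : f.fminus e θ ≤ N.cap e := by
  rcases lt_or_ge θ (N.time e) with h | h
  · rw [hf.2.2.1 e θ hθ h]
    exact (N.cap_pos e).le
  · have hiv := hf.2.2.2 e (θ - N.time e) (by linarith)
    rw [sub_add_cancel] at hiv
    rw [hiv]
    split_ifs
    exacts [le_rfl, min_le_right _ _]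

lemma fminus_add_time_of_pos (hf : Feasible N f) {θ : ℝ} (hθ : 0 ≤ θ)
    (hq : 0 < queueOf N f.fplus f.fminus e θ) : f.fminus e (θ + N.time e) = N.cap e := by
  rw [hf.2.2.2 e θ hθ, if_pos hq]

lemma fminus_add_time_of_nonpos (hf : Feasible N f) {θ : ℝ} (hθ : 0 ≤ θ)
    (hq : queueOf N f.fplus f.fminus e θ ≤ 0) :
    f.fminus e (θ + N.time e) = min (f.fplus e θ) (N.cap e) := by
  rw [hf.2.2.2 e θ hθ, if_neg hq.not_gt]

lemma fminus_add_time_eq_fplus (hf : Feasible N f) {θ : ℝ} (hθ : 0 ≤ θ)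
    (hq : queueOf N f.fplus f.fminus e θ = 0) (hcap : f.fplus e θ ≤ N.cap e) :
    f.fminus e (θ + N.time e) = f.fplus e θ := by
  rw [hf.fminus_add_time_of_nonpos hθ hq.le, min_eq_left hcap]

lemma integral_fminus_of_queueOf_pos (hf : Feasible N f) {a b : ℝ} (ha : 0 ≤ a) (hab : a ≤ b)
    (hq : ∀ ζ ∈ Ioo a b, 0 < queueOf N f.fplus f.fminus e ζ) :
    ∫ ζ in a + N.time e..b + N.time e, f.fminus e ζ = N.cap e * (b - a) := by
  rw [← intervalIntegral.integral_comp_add_right,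
    intervalIntegral.integral_congr_Ioo_of_le hab (g := fun _ => N.cap e)
      fun ζ hζ => hf.fminus_add_time_of_pos (ha.trans hζ.1.le) (hq ζ hζ),
    intervalIntegral.integral_const, smul_eq_mul, mul_comm]

lemma queueOf_nonneg (hf : Feasible N f) {θ : ℝ} (hθ : 0 ≤ θ) :
    0 ≤ queueOf N f.fplus f.fminus e θ := by
  -- while the queue is negative the outflow `min f⁺ ν` never exceeds the inflow
  have key := nonpos_of_nonincreasing_while_pos (q := fun θ => -queueOf N f.fplus f.fminus e θ)
    (f.continuous_queueOf e).neg.continuousOn (by simp [hf.queueOf_zero]) ?_ θ ⟨hθ, le_rfl⟩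
  · exact neg_nonpos.mp key
  intro θ₁ θ₂ h₁ h₁₂ _ hneg
  have hmono : ∫ ζ in θ₁..θ₂, f.fminus e (ζ + N.time e) ≤ ∫ ζ in θ₁..θ₂, f.fplus e ζ :=
    intervalIntegral.integral_mono_on_of_le_Ioo h₁₂
      (f.intervalIntegrable_fminus_comp_add_right e _ _ _) (f.intervalIntegrable_fplus e _ _)
      fun ζ hζ => by
        rw [hf.fminus_add_time_of_nonpos (h₁.trans hζ.1.le) (by linarith [hneg ζ hζ])]
        exact min_le_left _ _
  rw [intervalIntegral.integral_comp_add_right] at hmono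
  linarith [f.queueOf_sub_queueOf e θ₁ θ₂]

lemma queueOf_eq_zero_of_fplus_le_cap (hf : Feasible N f) {a b : ℝ} (ha : 0 ≤ a)
    (hqa : queueOf N f.fplus f.fminus e a = 0) (hin : ∀ ζ ∈ Ioo a b, f.fplus e ζ ≤ N.cap e) :
    ∀ θ ∈ Icc a b, queueOf N f.fplus f.fminus e θ = 0 := by
  -- while the queue is positive it is drained at full capacity
  have key :=
    nonpos_of_nonincreasing_while_pos (b := b) (f.continuous_queueOf e).continuousOn hqa.le ?_
  · exact fun θ hθ => le_antisymm (key θ hθ) (hf.queueOf_nonneg (ha.trans hθ.1))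
  intro θ₁ θ₂ h₁ h₁₂ h₂ hpos
  have hin' : ∫ ζ in θ₁..θ₂, f.fplus e ζ ≤ ∫ _ in θ₁..θ₂, N.cap e :=
    intervalIntegral.integral_mono_on_of_le_Ioo h₁₂ (f.intervalIntegrable_fplus e _ _)
      intervalIntegrable_const fun ζ hζ => hin ζ ⟨h₁.trans_lt hζ.1, hζ.2.trans_le h₂⟩
  rw [intervalIntegral.integral_const, smul_eq_mul] at hin'
  linarith [f.queueOf_sub_queueOf e θ₁ θ₂, hf.integral_fminus_of_queueOf_pos (ha.trans h₁) h₁₂ hpos]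

lemma queueOf_eq_zero_of_forall_fplus_le_cap (hf : Feasible N f)
    (hin : ∀ ζ, 0 ≤ ζ → f.fplus e ζ ≤ N.cap e) {θ : ℝ} (hθ : 0 ≤ θ) :
    queueOf N f.fplus f.fminus e θ = 0 :=
  hf.queueOf_eq_zero_of_fplus_le_cap le_rfl (hf.queueOf_zero e) (fun ζ hζ => hin ζ hζ.1.le)
    θ ⟨hθ, le_rfl⟩

lemma queueOf_sub_cap_mul_le (hf : Feasible N f) {a θ : ℝ} (ha : 0 ≤ a) (haθ : a ≤ θ) :
    queueOf N f.fplus f.fminus e a - N.cap e * (θ - a) ≤ queueOf N f.fplus f.fminus e θ := by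
  have hout : ∫ ζ in a..θ, f.fminus e (ζ + N.time e) ≤ ∫ _ in a..θ, N.cap e :=
    intervalIntegral.integral_mono_on haθ
      (f.intervalIntegrable_fminus_comp_add_right e _ _ _) intervalIntegrable_const
      fun ζ hζ => hf.fminus_le_cap (by linarith [hζ.1, N.time_pos e])
  have hin : 0 ≤ ∫ ζ in a..θ, f.fplus e ζ :=
    intervalIntegral.integral_nonneg haθ fun ζ _ => f.fplus_nonneg e ζ
  rw [intervalIntegral.integral_comp_add_right, intervalIntegral.integral_const,
    smul_eq_mul] at hout
  linarith [f.queueOf_sub_queueOf e a θ]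

lemma queueOf_eq_add_of_fplus_eq (hf : Feasible N f) {a b r : ℝ} (ha : 0 ≤ a)
    (hr : N.cap e ≤ r) (hin : ∀ ζ ∈ Ioo a b, f.fplus e ζ = r) :
    ∀ θ ∈ Icc a b, queueOf N f.fplus f.fminus e θ =
      queueOf N f.fplus f.fminus e a + (r - N.cap e) * (θ - a) := by
  intro θ hθ
  have hplus : ∫ ζ in a..θ, f.fplus e ζ = ∫ _ in a..θ, r :=
    intervalIntegral.integral_congr_Ioo_of_le hθ.1 fun ζ hζ => hin ζ ⟨hζ.1, hζ.2.trans_le hθ.2⟩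
  -- an empty queue also lets out `min r ν = ν`
  have hminus : ∫ ζ in a..θ, f.fminus e (ζ + N.time e) = ∫ _ in a..θ, N.cap e :=
    intervalIntegral.integral_congr_Ioo_of_le hθ.1 fun ζ hζ => by
      have hζ0 : 0 ≤ ζ := ha.trans hζ.1.le
      rcases lt_or_ge 0 (queueOf N f.fplus f.fminus e ζ) with hq | hq
      · exact hf.fminus_add_time_of_pos hζ0 hq
      · rw [hf.fminus_add_time_of_nonpos hζ0 hq, hin ζ ⟨hζ.1, hζ.2.trans_le hθ.2⟩, min_eq_right hr]
  rw [intervalIntegral.integral_comp_add_right] at hminus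
  simp only [intervalIntegral.integral_const, smul_eq_mul] at hplus hminus
  linarith [f.queueOf_sub_queueOf e a θ]

lemma queueOf_eq_max_of_fplus_eq_zero (hf : Feasible N f) {a b : ℝ} (ha : 0 ≤ a)
    (hin : ∀ ζ ∈ Ioo a b, f.fplus e ζ = 0) :
    ∀ θ ∈ Icc a b, queueOf N f.fplus f.fminus e θ =
      max (queueOf N f.fplus f.fminus e a - N.cap e * (θ - a)) 0 := by
  have hν := N.cap_pos e
  have hqa := hf.queueOf_nonneg (e := e) ha
  -- the queue empties at time `θ₀`
  set θ₀ := a + queueOf N f.fplus f.fminus e a / N.cap e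
  have hθ₀ : N.cap e * (θ₀ - a) = queueOf N f.fplus f.fminus e a := by
    simp only [θ₀, add_sub_cancel_left, mul_div_cancel₀ _ hν.ne']
  have hdrain : ∀ θ ∈ Icc a (min b θ₀),
      queueOf N f.fplus f.fminus e θ = queueOf N f.fplus f.fminus e a - N.cap e * (θ - a) :=
    fun θ hθ => by
      have hpos : ∀ ζ ∈ Ioo a θ, 0 < queueOf N f.fplus f.fminus e ζ := fun ζ hζ => by
        have := hf.queueOf_sub_cap_mul_le (e := e) ha hζ.1.le
        nlinarith [hζ.2.trans_le (hθ.2.trans (min_le_right _ _))]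
      have hplus : ∫ ζ in a..θ, f.fplus e ζ = ∫ _ in a..θ, 0 :=
        intervalIntegral.integral_congr_Ioo_of_le hθ.1
          fun ζ hζ => hin ζ ⟨hζ.1, hζ.2.trans_le (hθ.2.trans (min_le_left _ _))⟩
      rw [intervalIntegral.integral_zero] at hplus
      linarith [f.queueOf_sub_queueOf e a θ, hf.integral_fminus_of_queueOf_pos ha hθ.1 hpos]
  intro θ hθ
  rcases le_total θ θ₀ with h | h
  · rw [hdrain θ ⟨hθ.1, le_min hθ.2 h⟩, max_eq_left (by nlinarith)]
  · have hθ₀a : a ≤ θ₀ := le_add_of_nonneg_right (div_nonneg hqa hν.le)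
    have hqθ₀ : queueOf N f.fplus f.fminus e θ₀ = 0 := by
      rw [hdrain θ₀ ⟨hθ₀a, le_min (h.trans hθ.2) le_rfl⟩, hθ₀, sub_self]
    rw [hf.queueOf_eq_zero_of_fplus_le_cap (b := b) (ha.trans hθ₀a) hqθ₀
        (fun ζ hζ => (hin ζ ⟨hθ₀a.trans_lt hζ.1, hζ.2⟩).trans_le hν.le) θ ⟨h, hθ.2⟩,
      max_eq_right (by nlinarith)]

end Feasible

/-- The network `N₀`, with nodes `s, v, w, x, t` numbered `0, …, 4` and edges
`sv, sw, vt, wx, xt` numbered `0, …, 4`. -/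
structure IsN₀ (N : Network (Fin 5) (Fin 5)) : Prop where
  tail_eq : N.tail = ![0, 0, 1, 2, 3]
  head_eq : N.head = ![1, 2, 4, 3, 4]
  cap_eq : N.cap = ![2, 2, 1, 1, 1]
  time_eq : ∀ e, N.time e = 1
  sink_eq : N.sink = 4
  u_eq : ∀ w θ, N.u w θ = if w = 0 ∧ 0 ≤ θ then 2 else 0

namespace IsN₀

variable {N : Network (Fin 5) (Fin 5)} {f : FlowOverTime N} {θ : ℝ}

local notation "qvt" => queueOf N f.fplus f.fminus 2
local notation "qwx" => queueOf N f.fplus f.fminus 3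

lemma isWalk_t_iff (hN : IsN₀ N) (L : List (Fin 5)) : IsWalk N.tail N.head 4 4 L ↔ L = [] := by
  rcases L with _ | ⟨e, L⟩
  · simp [IsWalk]
  · fin_cases e <;> simp [IsWalk, congrFun hN.tail_eq]

lemma isWalk_x_iff (hN : IsN₀ N) (L : List (Fin 5)) : IsWalk N.tail N.head 3 4 L ↔ L = [4] := by
  rcases L with _ | ⟨e, L⟩
  · simp [IsWalk]
  · fin_cases e <;> simp [IsWalk, congrFun hN.tail_eq, congrFun hN.head_eq, hN.isWalk_t_iff]

lemma isWalk_w_iff (hN : IsN₀ N) (L : List (Fin 5)) :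
    IsWalk N.tail N.head 2 4 L ↔ L = [3, 4] := by
  rcases L with _ | ⟨e, L⟩
  · simp [IsWalk]
  · fin_cases e <;> simp [IsWalk, congrFun hN.tail_eq, congrFun hN.head_eq, hN.isWalk_x_iff]

lemma isWalk_v_iff (hN : IsN₀ N) (L : List (Fin 5)) : IsWalk N.tail N.head 1 4 L ↔ L = [2] := by
  rcases L with _ | ⟨e, L⟩
  · simp [IsWalk]
  · fin_cases e <;> simp [IsWalk, congrFun hN.tail_eq, congrFun hN.head_eq, hN.isWalk_t_iff]

lemma isWalk_s_iff (hN : IsN₀ N) (L : List (Fin 5)) :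
    IsWalk N.tail N.head 0 4 L ↔ L = [0, 2] ∨ L = [1, 3, 4] := by
  rcases L with _ | ⟨e, L⟩
  · simp [IsWalk]
  · fin_cases e <;>
      simp [IsWalk, congrFun hN.tail_eq, congrFun hN.head_eq, hN.isWalk_v_iff, hN.isWalk_w_iff]

lemma labelOf_v_eq_ctimeOf (hN : IsN₀ N) :
    labelOf N f.fplus f.fminus 1 θ = ctimeOf N f.fplus f.fminus 2 θ := by
  simp [labelOf, hN.sink_eq, hN.isWalk_v_iff]

lemma labelOf_w_eq_ctimeOf (hN : IsN₀ N) :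
    labelOf N f.fplus f.fminus 2 θ =
      ctimeOf N f.fplus f.fminus 3 θ + ctimeOf N f.fplus f.fminus 4 θ := by
  simp [labelOf, hN.sink_eq, hN.isWalk_w_iff]

lemma labelOf_s_eq_ctimeOf (hN : IsN₀ N) :
    labelOf N f.fplus f.fminus 0 θ =
      min (ctimeOf N f.fplus f.fminus 0 θ + ctimeOf N f.fplus f.fminus 2 θ)
        (ctimeOf N f.fplus f.fminus 1 θ +
          (ctimeOf N f.fplus f.fminus 3 θ + ctimeOf N f.fplus f.fminus 4 θ)) := by
  simp [labelOf, hN.sink_eq, hN.isWalk_s_iff, or_and_right, exists_or, Set.ofPred_or, min_comm]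

lemma cap_sv (hN : IsN₀ N) : N.cap 0 = 2 := by simp [hN.cap_eq]
lemma cap_sw (hN : IsN₀ N) : N.cap 1 = 2 := by simp [hN.cap_eq]
lemma cap_vt (hN : IsN₀ N) : N.cap 2 = 1 := by simp [hN.cap_eq]
lemma cap_wx (hN : IsN₀ N) : N.cap 3 = 1 := by simp [hN.cap_eq]
lemma cap_xt (hN : IsN₀ N) : N.cap 4 = 1 := by simp [hN.cap_eq]

lemma fplus_sv_add_fplus_sw (hN : IsN₀ N) (hf : Feasible N f) (hθ : 0 ≤ θ) :
    f.fplus 0 θ + f.fplus 1 θ = 2 := by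
  simpa [Network.outEdges, Network.inEdges, hN.tail_eq, hN.head_eq, hN.u_eq, hθ,
    Finset.sum_filter, Fin.sum_univ_five] using hf.1 0 (by simp [hN.sink_eq]) θ hθ

lemma fplus_vt_eq_fminus_sv (hN : IsN₀ N) (hf : Feasible N f) (hθ : 0 ≤ θ) :
    f.fplus 2 θ = f.fminus 0 θ := by
  simpa [Network.outEdges, Network.inEdges, hN.tail_eq, hN.head_eq, hN.u_eq, Finset.sum_filter,
    Fin.sum_univ_five, sub_eq_zero] using hf.1 1 (by simp [hN.sink_eq]) θ hθ

lemma fplus_wx_eq_fminus_sw (hN : IsN₀ N) (hf : Feasible N f) (hθ : 0 ≤ θ) :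
    f.fplus 3 θ = f.fminus 1 θ := by
  simpa [Network.outEdges, Network.inEdges, hN.tail_eq, hN.head_eq, hN.u_eq, Finset.sum_filter,
    Fin.sum_univ_five, sub_eq_zero] using hf.1 2 (by simp [hN.sink_eq]) θ hθ

lemma fplus_xt_eq_fminus_wx (hN : IsN₀ N) (hf : Feasible N f) (hθ : 0 ≤ θ) :
    f.fplus 4 θ = f.fminus 3 θ := by
  simpa [Network.outEdges, Network.inEdges, hN.tail_eq, hN.head_eq, hN.u_eq, Finset.sum_filter,
    Fin.sum_univ_five, sub_eq_zero] using hf.1 3 (by simp [hN.sink_eq]) θ hθ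

lemma queueOf_sv_eq_zero (hN : IsN₀ N) (hf : Feasible N f) (hθ : 0 ≤ θ) :
    queueOf N f.fplus f.fminus 0 θ = 0 :=
  hf.queueOf_eq_zero_of_forall_fplus_le_cap (fun ζ hζ => by
    linarith [hN.cap_sv, f.fplus_nonneg 1 ζ, hN.fplus_sv_add_fplus_sw hf hζ]) hθ

lemma queueOf_sw_eq_zero (hN : IsN₀ N) (hf : Feasible N f) (hθ : 0 ≤ θ) :
    queueOf N f.fplus f.fminus 1 θ = 0 :=
  hf.queueOf_eq_zero_of_forall_fplus_le_cap (fun ζ hζ => by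
    linarith [hN.cap_sw, f.fplus_nonneg 0 ζ, hN.fplus_sv_add_fplus_sw hf hζ]) hθ

lemma queueOf_xt_eq_zero (hN : IsN₀ N) (hf : Feasible N f) (hθ : 0 ≤ θ) :
    queueOf N f.fplus f.fminus 4 θ = 0 :=
  hf.queueOf_eq_zero_of_forall_fplus_le_cap (fun ζ hζ => by
    rw [hN.fplus_xt_eq_fminus_wx hf hζ, hN.cap_xt, ← hN.cap_wx]
    exact hf.fminus_le_cap hζ) hθ

lemma fplus_vt_add_one (hN : IsN₀ N) (hf : Feasible N f) (hθ : 0 ≤ θ) :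
    f.fplus 2 (θ + 1) = f.fplus 0 θ := by
  rw [hN.fplus_vt_eq_fminus_sv hf (by linarith), ← hN.time_eq 0, hf.fminus_add_time_eq_fplus hθ
    (hN.queueOf_sv_eq_zero hf hθ)]
  linarith [hN.cap_sv, f.fplus_nonneg 1 θ, hN.fplus_sv_add_fplus_sw hf hθ]

lemma fplus_wx_add_one (hN : IsN₀ N) (hf : Feasible N f) (hθ : 0 ≤ θ) :
    f.fplus 3 (θ + 1) = f.fplus 1 θ := by
  rw [hN.fplus_wx_eq_fminus_sw hf (by linarith), ← hN.time_eq 1, hf.fminus_add_time_eq_fplus hθ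
    (hN.queueOf_sw_eq_zero hf hθ)]
  linarith [hN.cap_sw, f.fplus_nonneg 0 θ, hN.fplus_sv_add_fplus_sw hf hθ]

lemma labelOf_s_eq (hN : IsN₀ N) (hf : Feasible N f) (hθ : 0 ≤ θ) :
    labelOf N f.fplus f.fminus 0 θ = min (2 + qvt θ) (3 + qwx θ) := by
  simp only [hN.labelOf_s_eq_ctimeOf, ctimeOf, hN.time_eq, hN.cap_sv, hN.cap_sw, hN.cap_vt,
    hN.cap_wx, hN.cap_xt, hN.queueOf_sv_eq_zero hf hθ, hN.queueOf_sw_eq_zero hf hθ,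
    hN.queueOf_xt_eq_zero hf hθ]
  ring_nf

lemma labelOf_v_eq (hN : IsN₀ N) : labelOf N f.fplus f.fminus 1 θ = 1 + qvt θ := by
  rw [hN.labelOf_v_eq_ctimeOf, ctimeOf, hN.time_eq, hN.cap_vt, div_one]

lemma labelOf_w_eq (hN : IsN₀ N) (hf : Feasible N f) (hθ : 0 ≤ θ) :
    labelOf N f.fplus f.fminus 2 θ = 2 + qwx θ := by
  simp only [hN.labelOf_w_eq_ctimeOf, ctimeOf, hN.time_eq, hN.cap_wx, hN.cap_xt,
    hN.queueOf_xt_eq_zero hf hθ]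
  ring

lemma fplus_sw_eq_zero (hN : IsN₀ N) (hf : IsIDE N f) (hθ : 0 ≤ θ) (h : qvt θ < 1 + qwx θ) :
    f.fplus 1 θ = 0 := by
  by_contra hne
  have hact : labelOf N f.fplus f.fminus 0 θ =
      ctimeOf N f.fplus f.fminus 1 θ + labelOf N f.fplus f.fminus 2 θ := by
    simpa [ActiveOf, hN.tail_eq, hN.head_eq] using hf.2 1 θ hθ ((f.fplus_nonneg 1 θ).lt_of_ne' hne)
  rw [hN.labelOf_s_eq hf.1 hθ, hN.labelOf_w_eq hf.1 hθ, ctimeOf, hN.time_eq,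
    hN.queueOf_sw_eq_zero hf.1 hθ, zero_div] at hact
  linarith [min_le_left (2 + qvt θ) (3 + qwx θ)]

lemma fplus_sv_eq_zero (hN : IsN₀ N) (hf : IsIDE N f) (hθ : 0 ≤ θ) (h : 1 + qwx θ < qvt θ) :
    f.fplus 0 θ = 0 := by
  by_contra hne
  have hact : labelOf N f.fplus f.fminus 0 θ =
      ctimeOf N f.fplus f.fminus 0 θ + labelOf N f.fplus f.fminus 1 θ := by
    simpa [ActiveOf, hN.tail_eq, hN.head_eq] using hf.2 0 θ hθ ((f.fplus_nonneg 0 θ).lt_of_ne' hne)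
  rw [hN.labelOf_s_eq hf.1 hθ, hN.labelOf_v_eq, ctimeOf, hN.time_eq,
    hN.queueOf_sv_eq_zero hf.1 hθ, zero_div] at hact
  linarith [min_le_right (2 + qvt θ) (3 + qwx θ)]

lemma fplus_sv_eq_two (hN : IsN₀ N) (hf : IsIDE N f) (hθ : 0 ≤ θ) (h : qvt θ < 1 + qwx θ) :
    f.fplus 0 θ = 2 := by
  linarith [hN.fplus_sv_add_fplus_sw hf.1 hθ, hN.fplus_sw_eq_zero hf hθ h]

lemma fplus_sw_eq_two (hN : IsN₀ N) (hf : IsIDE N f) (hθ : 0 ≤ θ) (h : 1 + qwx θ < qvt θ) :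
    f.fplus 1 θ = 2 := by
  linarith [hN.fplus_sv_add_fplus_sw hf.1 hθ, hN.fplus_sv_eq_zero hf hθ h]

lemma queues_of_fplus_sv_eq_two (hN : IsN₀ N) (hf : Feasible N f) {a b : ℝ} (ha : 1 ≤ a)
    (hsv : ∀ ζ ∈ Ioo a b, f.fplus 0 (ζ - 1) = 2) :
    ∀ θ ∈ Icc a b, qvt θ = qvt a + (θ - a) ∧ qwx θ = max (qwx a - (θ - a)) 0 := by
  have hin : ∀ ζ ∈ Ioo a b, f.fplus 2 ζ = 2 ∧ f.fplus 3 ζ = 0 := fun ζ hζ => by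
    have hζ1 : 0 ≤ ζ - 1 := by linarith [hζ.1]
    rw [← sub_add_cancel ζ 1, hN.fplus_vt_add_one hf hζ1, hN.fplus_wx_add_one hf hζ1]
    exact ⟨hsv ζ hζ, by linarith [hN.fplus_sv_add_fplus_sw hf hζ1, hsv ζ hζ]⟩
  intro θ hθ
  constructor
  · rw [hf.queueOf_eq_add_of_fplus_eq (by linarith) (by rw [hN.cap_vt]; norm_num)
      (fun ζ hζ => (hin ζ hζ).1) θ hθ, hN.cap_vt]
    ring
  · rw [hf.queueOf_eq_max_of_fplus_eq_zero (by linarith) (fun ζ hζ => (hin ζ hζ).2) θ hθ,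
      hN.cap_wx, one_mul]

lemma queues_of_fplus_sw_eq_two (hN : IsN₀ N) (hf : Feasible N f) {a b : ℝ} (ha : 1 ≤ a)
    (hsw : ∀ ζ ∈ Ioo a b, f.fplus 1 (ζ - 1) = 2) :
    ∀ θ ∈ Icc a b, qvt θ = max (qvt a - (θ - a)) 0 ∧ qwx θ = qwx a + (θ - a) := by
  have hin : ∀ ζ ∈ Ioo a b, f.fplus 2 ζ = 0 ∧ f.fplus 3 ζ = 2 := fun ζ hζ => by
    have hζ1 : 0 ≤ ζ - 1 := by linarith [hζ.1]
    rw [← sub_add_cancel ζ 1, hN.fplus_vt_add_one hf hζ1, hN.fplus_wx_add_one hf hζ1]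
    exact ⟨by linarith [hN.fplus_sv_add_fplus_sw hf hζ1, hsw ζ hζ], hsw ζ hζ⟩
  intro θ hθ
  constructor
  · rw [hf.queueOf_eq_max_of_fplus_eq_zero (by linarith) (fun ζ hζ => (hin ζ hζ).1) θ hθ,
      hN.cap_vt, one_mul]
  · rw [hf.queueOf_eq_add_of_fplus_eq (by linarith) (by rw [hN.cap_wx]; norm_num)
      (fun ζ hζ => (hin ζ hζ).2) θ hθ, hN.cap_wx]
    ring

-- the state of the theorem at time `T = 4k + 2⁻ᵏ`, with `ε = 2⁻ᵏ`
variable (f) in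
def VtFilling (T ε : ℝ) : Prop :=
  qvt T = 1 - ε ∧ qwx T = 2 - ε ∧ ∀ ζ ∈ Ioo (T - 1) T, f.fplus 0 ζ = 2

variable (f) in
def VtDraining (S ε : ℝ) : Prop :=
  qvt S = 3 - ε ∧ qwx S = 0 ∧ ∀ ζ ∈ Ioo (S - 1) S, f.fplus 1 ζ = 2

lemma VtFilling.vtDraining {T ε : ℝ} (h : VtFilling f T ε) (hN : IsN₀ N) (hf : IsIDE N f)
    (hT : 1 ≤ T) (hε₀ : 0 ≤ ε) (hε₁ : ε ≤ 1) :
    qwx (T + 2 - ε) = 0 ∧ VtDraining f (T + 2) ε := by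
  obtain ⟨hA, hB, hsv⟩ := h
  have h₁ : ∀ θ ∈ Icc T (T + 1), qvt θ = 1 - ε + (θ - T) ∧ qwx θ = 2 - ε - (θ - T) :=
    fun θ hθ => by
      obtain ⟨hA', hB'⟩ := hN.queues_of_fplus_sv_eq_two hf.1 hT
        (fun ζ hζ => hsv _ ⟨by linarith [hζ.1], by linarith [hζ.2]⟩) θ hθ
      rw [hA', hB', hA, hB, max_eq_left (by linarith [hθ.2])]
      exact ⟨rfl, rfl⟩
  have hsv₁ : ∀ ζ ∈ Ioo T (T + 1), f.fplus 0 ζ = 2 := fun ζ hζ => by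
    obtain ⟨hA', hB'⟩ := h₁ ζ (Ioo_subset_Icc_self hζ)
    exact hN.fplus_sv_eq_two hf (by linarith [hζ.1]) (by rw [hA', hB']; linarith [hζ.2])
  have h₂ : ∀ θ ∈ Icc (T + 1) (T + 2),
      qvt θ = 2 - ε + (θ - (T + 1)) ∧ qwx θ = max (1 - ε - (θ - (T + 1))) 0 := fun θ hθ => by
    obtain ⟨hA', hB'⟩ := hN.queues_of_fplus_sv_eq_two hf.1 (by linarith)
      (fun ζ hζ => hsv₁ _ ⟨by linarith [hζ.1], by linarith [hζ.2]⟩) θ hθ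
    obtain ⟨hA₁, hB₁⟩ := h₁ (T + 1) ⟨by linarith, le_rfl⟩
    rw [hA', hB', hA₁, hB₁]
    constructor <;> ring_nf
  have hsw₂ : ∀ ζ ∈ Ioo (T + 1) (T + 2), f.fplus 1 ζ = 2 := fun ζ hζ => by
    obtain ⟨hA', hB'⟩ := h₂ ζ (Ioo_subset_Icc_self hζ)
    have : max (1 - ε - (ζ - (T + 1))) 0 < 1 - ε + (ζ - (T + 1)) :=
      max_lt (by linarith [hζ.1]) (by linarith [hζ.1])
    exact hN.fplus_sw_eq_two hf (by linarith [hζ.1]) (by rw [hA', hB']; linarith)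
  refine ⟨?_, ?_, ?_, fun ζ hζ => hsw₂ ζ ⟨by linarith [hζ.1], hζ.2⟩⟩
  · rw [(h₂ (T + 2 - ε) ⟨by linarith, by linarith⟩).2]
    exact max_eq_right (by linarith)
  · rw [(h₂ (T + 2) ⟨by linarith, le_rfl⟩).1]
    ring
  · rw [(h₂ (T + 2) ⟨by linarith, le_rfl⟩).2]
    exact max_eq_right (by linarith)

lemma VtDraining.vtFilling {S ε : ℝ} (h : VtDraining f S ε) (hN : IsN₀ N) (hf : IsIDE N f)
    (hS : 1 ≤ S) (hε₀ : 0 < ε) (hε₁ : ε ≤ 1) :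
    VtFilling f (S + 2 - ε / 2) (ε / 2) := by
  obtain ⟨hA, hB, hsw⟩ := h
  have h₁ : ∀ θ ∈ Icc S (S + 1), qvt θ = 3 - ε - (θ - S) ∧ qwx θ = θ - S := fun θ hθ => by
    obtain ⟨hA', hB'⟩ := hN.queues_of_fplus_sw_eq_two hf.1 hS
      (fun ζ hζ => hsw _ ⟨by linarith [hζ.1], by linarith [hζ.2]⟩) θ hθ
    rw [hA', hB', hA, hB, max_eq_left (by linarith [hθ.2]), zero_add]
    exact ⟨rfl, rfl⟩
  have hsw₁ : ∀ ζ ∈ Ioo S (S + 1 - ε / 2), f.fplus 1 ζ = 2 := fun ζ hζ => by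
    obtain ⟨hA', hB'⟩ := h₁ ζ ⟨hζ.1.le, by linarith [hζ.2]⟩
    exact hN.fplus_sw_eq_two hf (by linarith [hζ.1]) (by rw [hA', hB']; linarith [hζ.2])
  have h₂ : ∀ θ ∈ Icc (S + 1) (S + 2 - ε / 2),
      qvt θ = 2 - ε - (θ - (S + 1)) ∧ qwx θ = 1 + (θ - (S + 1)) := fun θ hθ => by
    obtain ⟨hA', hB'⟩ := hN.queues_of_fplus_sw_eq_two hf.1 (by linarith)
      (fun ζ hζ => hsw₁ _ ⟨by linarith [hζ.1], by linarith [hζ.2]⟩) θ hθ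
    obtain ⟨hA₁, hB₁⟩ := h₁ (S + 1) ⟨by linarith, le_rfl⟩
    rw [hA', hB', hA₁, hB₁, max_eq_left (by linarith [hθ.2])]
    constructor <;> ring
  have hsv₂ : ∀ ζ ∈ Ioo (S + 1 - ε / 2) (S + 2 - ε / 2), f.fplus 0 ζ = 2 := fun ζ hζ => by
    refine hN.fplus_sv_eq_two hf (by linarith [hζ.1]) ?_
    rcases le_total ζ (S + 1) with hζ₁ | hζ₁
    · obtain ⟨hA', hB'⟩ := h₁ ζ ⟨by linarith [hζ.1], hζ₁⟩
      rw [hA', hB']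
      linarith [hζ.1]
    · obtain ⟨hA', hB'⟩ := h₂ ζ ⟨hζ₁, hζ.2.le⟩
      rw [hA', hB']
      linarith
  obtain ⟨hA₂, hB₂⟩ := h₂ (S + 2 - ε / 2) ⟨by linarith, le_rfl⟩
  refine ⟨by rw [hA₂]; ring, by rw [hB₂]; ring, fun ζ hζ => hsv₂ ζ ⟨by linarith [hζ.1], hζ.2⟩⟩

lemma VtFilling.add_period {T ε : ℝ} (h : VtFilling f T ε) (hN : IsN₀ N) (hf : IsIDE N f)
    (hT : 1 ≤ T) (hε₀ : 0 < ε) (hε₁ : ε ≤ 1) :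
    VtFilling f (T + 4 - ε / 2) (ε / 2) := by
  have := (h.vtDraining hN hf hT hε₀.le hε₁).2.vtFilling hN hf (by linarith) hε₀ hε₁
  rwa [show T + 2 + 2 = T + 4 by ring] at this

lemma fplus_vt_eq_zero (hN : IsN₀ N) (hf : Feasible N f) (hθ₀ : 0 ≤ θ) (hθ₁ : θ < 1) :
    f.fplus 2 θ = 0 := by
  rw [hN.fplus_vt_eq_fminus_sv hf hθ₀]
  exact hf.2.2.1 0 θ hθ₀ (by rw [hN.time_eq]; exact hθ₁)

lemma fplus_wx_eq_zero (hN : IsN₀ N) (hf : Feasible N f) (hθ₀ : 0 ≤ θ) (hθ₁ : θ < 1) :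
    f.fplus 3 θ = 0 := by
  rw [hN.fplus_wx_eq_fminus_sw hf hθ₀]
  exact hf.2.2.1 1 θ hθ₀ (by rw [hN.time_eq]; exact hθ₁)

lemma vtDraining_three (hN : IsN₀ N) (hf : IsIDE N f) : VtDraining f 3 1 := by
  have h₀ : ∀ θ ∈ Icc (0 : ℝ) 1, qvt θ = 0 ∧ qwx θ = 0 := fun θ hθ =>
    ⟨hf.1.queueOf_eq_zero_of_fplus_le_cap le_rfl (hf.1.queueOf_zero 2)
        (fun ζ hζ => by rw [hN.fplus_vt_eq_zero hf.1 hζ.1.le hζ.2, hN.cap_vt]; norm_num) θ hθ,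
      hf.1.queueOf_eq_zero_of_fplus_le_cap le_rfl (hf.1.queueOf_zero 3)
        (fun ζ hζ => by rw [hN.fplus_wx_eq_zero hf.1 hζ.1.le hζ.2, hN.cap_wx]; norm_num) θ hθ⟩
  have hsv₀ : ∀ ζ ∈ Ioo (0 : ℝ) 1, f.fplus 0 ζ = 2 := fun ζ hζ => by
    obtain ⟨hA', hB'⟩ := h₀ ζ (Ioo_subset_Icc_self hζ)
    exact hN.fplus_sv_eq_two hf hζ.1.le (by rw [hA', hB']; norm_num)
  have h₁ : ∀ θ ∈ Icc (1 : ℝ) 2, qvt θ = θ - 1 ∧ qwx θ = 0 := fun θ hθ => by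
    obtain ⟨hA', hB'⟩ := hN.queues_of_fplus_sv_eq_two hf.1 le_rfl
      (fun ζ hζ => hsv₀ _ ⟨by linarith [hζ.1], by linarith [hζ.2]⟩) θ hθ
    obtain ⟨hA₀, hB₀⟩ := h₀ 1 ⟨zero_le_one, le_rfl⟩
    rw [hA', hB', hA₀, hB₀, max_eq_right (by linarith [hθ.1])]
    exact ⟨by ring, rfl⟩
  have hsv₁ : ∀ ζ ∈ Ioo (1 : ℝ) 2, f.fplus 0 ζ = 2 := fun ζ hζ => by
    obtain ⟨hA', hB'⟩ := h₁ ζ (Ioo_subset_Icc_self hζ)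
    exact hN.fplus_sv_eq_two hf (by linarith [hζ.1]) (by rw [hA', hB']; linarith [hζ.2])
  have h₂ : ∀ θ ∈ Icc (2 : ℝ) 3, qvt θ = θ - 1 ∧ qwx θ = 0 := fun θ hθ => by
    obtain ⟨hA', hB'⟩ := hN.queues_of_fplus_sv_eq_two hf.1 (by norm_num)
      (fun ζ hζ => hsv₁ _ ⟨by linarith [hζ.1], by linarith [hζ.2]⟩) θ hθ
    obtain ⟨hA₁, hB₁⟩ := h₁ 2 ⟨by norm_num, le_rfl⟩
    rw [hA', hB', hA₁, hB₁, max_eq_right (by linarith [hθ.1])]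
    exact ⟨by ring, rfl⟩
  obtain ⟨hA₃, hB₃⟩ := h₂ 3 ⟨by norm_num, le_rfl⟩
  refine ⟨by norm_num [hA₃], hB₃, fun ζ hζ => ?_⟩
  obtain ⟨hA', hB'⟩ := h₂ ζ ⟨by linarith [hζ.1], hζ.2.le⟩
  exact hN.fplus_sw_eq_two hf (by linarith [hζ.1]) (by rw [hA', hB']; linarith [hζ.1])

lemma vtFilling_of_one_le (hN : IsN₀ N) (hf : IsIDE N f) {k : ℕ} (hk : 1 ≤ k) :
    VtFilling f (4 * k + (2 : ℝ) ^ (-(k : ℤ))) ((2 : ℝ) ^ (-(k : ℤ))) := by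
  induction k, hk using Nat.le_induction with
  | base =>
    have := (hN.vtDraining_three hf).vtFilling hN hf (by norm_num) one_pos le_rfl
    norm_num at this ⊢
    exact this
  | succ k hk ih =>
    have hε₀ : 0 < (2 : ℝ) ^ (-(k : ℤ)) := by positivity
    have hε₁ : (2 : ℝ) ^ (-(k : ℤ)) ≤ 1 := zpow_le_one_of_nonpos₀ one_le_two (by simp)
    have hhalf : (2 : ℝ) ^ (-((k + 1 : ℕ) : ℤ)) = 2 ^ (-(k : ℤ)) / 2 := by
      rw [Nat.cast_succ, neg_add, zpow_add₀ two_ne_zero, zpow_neg_one, div_eq_mul_inv]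
    have := ih.add_period hN hf (by linarith [(Nat.one_le_cast (α := ℝ)).mpr hk]) hε₀ hε₁
    rw [hhalf]
    convert this using 1
    push_cast
    ring

end IsN₀

/-- In the five-node network `N₀` (nodes `s=0, v=1, w=2, x=3, t=4`,
edges `sv=0, sw=1, vt=2, wx=3, xt=4`, all travel times `1`, capacities `2,2,1,1,1`,
sink `t`) with everlasting constant inflow rate `2` at `s`, every IDE flow satisfies,
for every integer `k ≥ 1`: `q_vt(4k+2^{−k}) = 1−2^{−k}`, `q_wx(4k+2^{−k}) = 2−2^{−k}`,
`q_vt(4k+2^{−k}+2) = 3−2^{−k}` and `q_wx(4k+2) = 0`. -/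
theorem ide_oscillating_queues
    (N : Network (Fin 5) (Fin 5))
    (htail : N.tail = ![0, 0, 1, 2, 3])
    (hhead : N.head = ![1, 2, 4, 3, 4])
    (hcap : N.cap = ![2, 2, 1, 1, 1])
    (htime : ∀ e, N.time e = 1)
    (hsink : N.sink = 4)
    (hu : ∀ w θ, N.u w θ = if w = 0 ∧ 0 ≤ θ then 2 else 0) :
    ∀ f : FlowOverTime N, IsIDE N f → ∀ k : ℕ, 1 ≤ k →
      queueOf N f.fplus f.fminus 2 (4 * k + (2:ℝ) ^ (-(k:ℤ))) = 1 - (2:ℝ) ^ (-(k:ℤ)) ∧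
      queueOf N f.fplus f.fminus 3 (4 * k + (2:ℝ) ^ (-(k:ℤ))) = 2 - (2:ℝ) ^ (-(k:ℤ)) ∧
      queueOf N f.fplus f.fminus 2 (4 * k + (2:ℝ) ^ (-(k:ℤ)) + 2) = 3 - (2:ℝ) ^ (-(k:ℤ)) ∧
      queueOf N f.fplus f.fminus 3 (4 * k + 2) = 0 := by
  intro f hf k hk
  have hN : IsN₀ N := ⟨htail, hhead, hcap, htime, hsink, hu⟩
  have hfill := hN.vtFilling_of_one_le hf hk
  have hε₀ : (0 : ℝ) < 2 ^ (-(k : ℤ)) := by positivity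
  obtain ⟨hwx, hA, -, -⟩ := hfill.vtDraining hN hf
    (by linarith [(Nat.one_le_cast (α := ℝ)).mpr hk]) hε₀.le
    (zpow_le_one_of_nonpos₀ one_le_two (by simp))
  refine ⟨hfill.1, hfill.2.1, hA, ?_⟩
  rwa [add_sub_right_comm, add_sub_cancel_right] at hwx
end

section
/- Let N₀ be the five-node network described below, equipped with the everlasting constant network inflow rate u_s(θ) = 2 for all θ ≥ 0 at node s and zero inflow at all other nodes. Then: (a) the inflow rate is at most the capacity of every s-t cut, i.e. for every X ⊆ V with s ∈ X and t ∉ X one has Σ_{e∈δ⁺(X)} ν_e ≥ 2; and yet (b) no instantaneous dynamic equilibrium (IDE) flow in this network ever reaches a periodic state: there are no time θ̃ ≥ 0 and period p > 0 such that q_e(θ + kp) = q_e(θ) for all edges e, all θ ≥ θ̃ and all k ∈ ℕ. In particular, no IDE flow in this network reaches a steady state (a time after which all queue lengths stay constant forever). -/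
open MeasureTheory Set

variable {V E : Type} [Fintype V] [DecidableEq V] [Fintype E] [DecidableEq E]

/-!
The queues on `sv`, `sw` and `xt` never build up, so an IDE is described by the queues `a` on
`vt` and `b` on `wx` and by the rate `g` sent into `sv`: comparing the two `s`-`t` paths, all
flow goes via `v` while `a < 1 + b` and via `w` while `a > 1 + b`, and it reaches `vt` and `wx`
one time unit later. Following the resulting piecewise linear queues through one cycle: if
`(a, b) = (1 + d, d)` when the flow switches away from `v`, then `a` peaks at `2 + d` and at the
next such switch `(a, b) = (1 + d', d')` with `d' = (1 + d) / 2`. So the peaks `3 - 2⁻ᵏ` increase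
strictly to `3` while `a < 3` throughout, which a continuous eventually periodic function cannot
do: it attains its supremum on every tail.
-/

theorem Continuous.nonneg_of_le_of_neg_on_Ioo {q : ℝ → ℝ} (hq : Continuous q) {a : ℝ}
    (ha : 0 ≤ q a) (hle : ∀ x y, a ≤ x → x ≤ y → (∀ ζ ∈ Ioo x y, q ζ < 0) → q x ≤ q y)
    {θ : ℝ} (hθ : a ≤ θ) : 0 ≤ q θ := by
  by_contra! hneg
  set S := Icc a θ ∩ q ⁻¹' Ici 0
  have hK : IsCompact S := isCompact_Icc.inter_right (isClosed_Ici.preimage hq)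
  obtain ⟨⟨haσ, hσθ⟩, hσ⟩ := hK.sSup_mem ⟨a, ⟨le_rfl, hθ⟩, ha⟩
  have hlast : ∀ ζ ∈ Ioo (sSup S) θ, q ζ < 0 := fun ζ hζ => by
    by_contra! hζq
    exact (le_csSup hK.bddAbove ⟨⟨haσ.trans hζ.1.le, hζ.2.le⟩, hζq⟩).not_gt hζ.1
  linarith [hle _ θ haσ hσθ hlast, show 0 ≤ q (sSup S) from hσ]

theorem const_mul_sub_le_integral {g : ℝ → ℝ} {x y m : ℝ} (hxy : x ≤ y)
    (hg : IntervalIntegrable g volume x y) (h : ∀ ζ ∈ Ioo x y, m ≤ g ζ) :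
    m * (y - x) ≤ ∫ ζ in x..y, g ζ := by
  simpa [mul_comm] using
    intervalIntegral.integral_mono_on_of_le_Ioo hxy intervalIntegrable_const hg h

theorem integral_le_const_mul_sub {g : ℝ → ℝ} {x y m : ℝ} (hxy : x ≤ y)
    (hg : IntervalIntegrable g volume x y) (h : ∀ ζ ∈ Ioo x y, g ζ ≤ m) :
    ∫ ζ in x..y, g ζ ≤ m * (y - x) := by
  simpa [mul_comm] using
    intervalIntegral.integral_mono_on_of_le_Ioo hxy hg intervalIntegrable_const h

theorem Continuous.exists_forall_le_of_periodic {q : ℝ → ℝ} (hq : Continuous q) {θt p : ℝ}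
    (hp : 0 < p) (hper : ∀ θ, θt ≤ θ → ∀ k : ℕ, q (θ + k * p) = q θ) :
    ∃ θm, θt ≤ θm ∧ ∀ θ, θt ≤ θ → q θ ≤ q θm := by
  obtain ⟨θm, hθm, hmax⟩ := isCompact_Icc.exists_isMaxOn
    (nonempty_Icc.2 (le_add_of_nonneg_right hp.le)) hq.continuousOn
  refine ⟨θm, hθm.1, fun θ hθ => ?_⟩
  set k := ⌊(θ - θt) / p⌋₊
  have hk₁ : k * p ≤ θ - θt := (le_div_iff₀ hp).1 (Nat.floor_le (div_nonneg (by linarith) hp.le))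
  have hk₂ : θ - θt < (k + 1) * p := (div_lt_iff₀ hp).1 (Nat.lt_floor_add_one _)
  have hshift := hper (θ - k * p) (by linarith) k
  rw [sub_add_cancel] at hshift
  rw [hshift]
  exact hmax ⟨by linarith, by linarith⟩

section QueueDynamics

variable {N : Network V E} (f : FlowOverTime N) (e : E)

theorem FlowOverTime.intervalIntegrable_fplus_s14 (x y : ℝ) :
    IntervalIntegrable (f.fplus e) volume x y :=
  (f.fplus_int e x).symm.trans (f.fplus_int e y)

theorem FlowOverTime.intervalIntegrable_fminus_s14 (x y : ℝ) :
    IntervalIntegrable (f.fminus e) volume x y :=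
  (f.fminus_int e x).symm.trans (f.fminus_int e y)

theorem FlowOverTime.intervalIntegrable_fminus_add_time (x y : ℝ) :
    IntervalIntegrable (fun ζ => f.fminus e (ζ + N.time e)) volume x y := by
  simpa using (f.intervalIntegrable_fminus_s14 e (x + N.time e) (y + N.time e)).comp_add_right
    (N.time e)

theorem FlowOverTime.intervalIntegrable_queue_rate (x y : ℝ) :
    IntervalIntegrable (fun ζ => f.fplus e ζ - f.fminus e (ζ + N.time e)) volume x y :=
  (f.intervalIntegrable_fplus_s14 e x y).sub (f.intervalIntegrable_fminus_add_time e x y)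

theorem queueOf_sub_queueOf (x y : ℝ) :
    queueOf N f.fplus f.fminus e y - queueOf N f.fplus f.fminus e x =
      ∫ ζ in x..y, (f.fplus e ζ - f.fminus e (ζ + N.time e)) := by
  rw [intervalIntegral.integral_sub (f.intervalIntegrable_fplus_s14 e x y)
      (f.intervalIntegrable_fminus_add_time e x y),
    intervalIntegral.integral_comp_add_right, queueOf, queueOf,
    ← intervalIntegral.integral_interval_sub_left (f.fplus_int e y) (f.fplus_int e x),
    ← intervalIntegral.integral_interval_sub_left (f.fminus_int e (y + N.time e))
      (f.fminus_int e (x + N.time e))]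
  ring

theorem continuous_queueOf : Continuous (queueOf N f.fplus f.fminus e) := by
  have hprim (g : ℝ → ℝ) (hg : ∀ x y, IntervalIntegrable g volume x y) :
      Continuous fun θ => ∫ ζ in (0 : ℝ)..θ, g ζ :=
    intervalIntegral.continuous_primitive hg 0
  exact (hprim _ (f.intervalIntegrable_fplus_s14 e)).sub
    ((hprim _ (f.intervalIntegrable_fminus_s14 e)).comp (continuous_add_const _))

variable {f e}

theorem Feasible.queueOf_zero_s14 (hf : Feasible N f) : queueOf N f.fplus f.fminus e 0 = 0 := by
  have hempty : ∫ ζ in (0 : ℝ)..N.time e, f.fminus e ζ = 0 := by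
    rw [intervalIntegral.integral_congr_Ioo_of_le (N.time_pos e).le
      (fun ζ hζ => hf.2.2.1 e ζ hζ.1.le hζ.2), intervalIntegral.integral_zero]
  simp [queueOf, hempty]

theorem Feasible.fminus_le_cap_s14 (hf : Feasible N f) {θ : ℝ} (hθ : 0 ≤ θ) :
    f.fminus e θ ≤ N.cap e := by
  rcases lt_or_ge θ (N.time e) with hlt | hge
  · rw [hf.2.2.1 e θ hθ hlt]; exact (N.cap_pos e).le
  · have h := hf.2.2.2 e (θ - N.time e) (by linarith)
    rw [sub_add_cancel] at h
    rw [h]; split_ifs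
    exacts [le_rfl, min_le_right _ _]

theorem Feasible.fminus_add_time_of_pos_s14 (hf : Feasible N f) {θ : ℝ} (hθ : 0 ≤ θ)
    (hq : 0 < queueOf N f.fplus f.fminus e θ) : f.fminus e (θ + N.time e) = N.cap e := by
  rw [hf.2.2.2 e θ hθ, if_pos hq]

theorem Feasible.fminus_add_time_of_nonpos_s14 (hf : Feasible N f) {θ : ℝ} (hθ : 0 ≤ θ)
    (hq : queueOf N f.fplus f.fminus e θ ≤ 0) :
    f.fminus e (θ + N.time e) = min (f.fplus e θ) (N.cap e) := by
  rw [hf.2.2.2 e θ hθ, if_neg hq.not_gt]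

theorem Feasible.queueOf_nonneg_s14 (hf : Feasible N f) {θ : ℝ} (hθ : 0 ≤ θ) :
    0 ≤ queueOf N f.fplus f.fminus e θ := by
  refine (continuous_queueOf f e).nonneg_of_le_of_neg_on_Ioo hf.queueOf_zero_s14.ge
    (fun x y hx hxy hneg => ?_) hθ
  have hrate := const_mul_sub_le_integral hxy (f.intervalIntegrable_queue_rate e x y)
    (m := 0) fun ζ hζ => by
      rw [hf.fminus_add_time_of_nonpos_s14 (hx.trans hζ.1.le) (hneg ζ hζ).le]
      linarith [min_le_left (f.fplus e ζ) (N.cap e)]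
  linarith [queueOf_sub_queueOf f e x y]

theorem Feasible.queueOf_eq_zero_of_fplus_le_cap_s14 (hf : Feasible N f)
    (hin : ∀ θ, 0 ≤ θ → f.fplus e θ ≤ N.cap e) {θ : ℝ} (hθ : 0 ≤ θ) :
    queueOf N f.fplus f.fminus e θ = 0 := by
  refine le_antisymm ?_ (hf.queueOf_nonneg_s14 hθ)
  have hneg : 0 ≤ -queueOf N f.fplus f.fminus e θ := by
    refine (continuous_queueOf f e).neg.nonneg_of_le_of_neg_on_Ioo (by simp [hf.queueOf_zero_s14])
      (fun x y hx hxy hpos => ?_) hθ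
    have hrate := integral_le_const_mul_sub hxy (f.intervalIntegrable_queue_rate e x y)
      (m := 0) fun ζ hζ => by
        have hζ0 : 0 ≤ ζ := hx.trans hζ.1.le
        rw [hf.fminus_add_time_of_pos_s14 hζ0 (neg_neg_iff_pos.mp (hpos ζ hζ))]
        linarith [hin ζ hζ0]
    simp only [Pi.neg_apply, neg_le_neg_iff]
    linarith [queueOf_sub_queueOf f e x y]
  linarith

theorem Feasible.fminus_add_time_eq_fplus_s14 (hf : Feasible N f) {θ : ℝ} (hθ : 0 ≤ θ)
    (hq : queueOf N f.fplus f.fminus e θ = 0) (hin : f.fplus e θ ≤ N.cap e) :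
    f.fminus e (θ + N.time e) = f.fplus e θ := by
  rw [hf.fminus_add_time_of_nonpos_s14 hθ hq.le, min_eq_left hin]

theorem Feasible.queueOf_eq_of_cap_le_fplus (hf : Feasible N f) {a b c : ℝ} (ha : 0 ≤ a)
    (hc : N.cap e ≤ c) (hin : ∀ ζ ∈ Ioo a b, f.fplus e ζ = c) {z : ℝ} (hz : z ∈ Icc a b) :
    queueOf N f.fplus f.fminus e z = queueOf N f.fplus f.fminus e a + (c - N.cap e) * (z - a) := by
  have hrate : ∫ ζ in a..z, (f.fplus e ζ - f.fminus e (ζ + N.time e)) =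
      (z - a) * (c - N.cap e) := by
    rw [intervalIntegral.integral_congr_Ioo_of_le hz.1 (g := fun _ => c - N.cap e),
      intervalIntegral.integral_const, smul_eq_mul]
    intro ζ hζ
    have hζ0 : 0 ≤ ζ := ha.trans hζ.1.le
    have hcap : f.fminus e (ζ + N.time e) = N.cap e := by
      rw [hf.2.2.2 e ζ hζ0, hin ζ ⟨hζ.1, hζ.2.trans_le hz.2⟩, min_eq_right hc, ite_self]
    simp only [hcap, hin ζ ⟨hζ.1, hζ.2.trans_le hz.2⟩]
  linarith [queueOf_sub_queueOf f e a z]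

theorem Feasible.queueOf_eq_of_fplus_le_cap (hf : Feasible N f) {a b c : ℝ} (ha : 0 ≤ a)
    (hc : c ≤ N.cap e) (hin : ∀ ζ ∈ Ioo a b, f.fplus e ζ = c) {z : ℝ} (hz : z ∈ Icc a b) :
    queueOf N f.fplus f.fminus e z =
      max (queueOf N f.fplus f.fminus e a - (N.cap e - c) * (z - a)) 0 := by
  set q := queueOf N f.fplus f.fminus e
  set r := fun ζ => f.fplus e ζ - f.fminus e (ζ + N.time e)
  have hsub : ∀ {x y}, x ∈ Icc a z → y ∈ Icc a z → Ioo x y ⊆ Ioo a b := fun hx hy ζ hζ =>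
    ⟨hx.1.trans_lt hζ.1, hζ.2.trans_le (hy.2.trans hz.2)⟩
  have hr_pos : ∀ ζ ∈ Ioo a b, 0 < q ζ → r ζ = c - N.cap e := fun ζ hζ hq => by
    simp only [r, hin ζ hζ, hf.fminus_add_time_of_pos_s14 (ha.trans hζ.1.le) hq]
  have hr_ge : ∀ ζ ∈ Ioo a b, c - N.cap e ≤ r ζ := fun ζ hζ => by
    simp only [r, hin ζ hζ]
    linarith [hf.fminus_le_cap_s14 (e := e) (add_nonneg (ha.trans hζ.1.le) (N.time_pos e).le)]
  have hr_le : ∀ ζ ∈ Ioo a b, r ζ ≤ 0 := fun ζ hζ => by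
    rcases lt_or_ge 0 (q ζ) with hq | hq
    · rw [hr_pos ζ hζ hq]; linarith
    · simp only [r, hin ζ hζ, hf.fminus_add_time_of_nonpos_s14 (ha.trans hζ.1.le) hq,
        min_eq_left hc, sub_self, le_refl]
  have hlower : q a - (N.cap e - c) * (z - a) ≤ q z := by
    linarith [queueOf_sub_queueOf f e a z, const_mul_sub_le_integral hz.1
      (f.intervalIntegrable_queue_rate e a z) fun ζ hζ =>
        hr_ge ζ (hsub (left_mem_Icc.2 hz.1) (right_mem_Icc.2 hz.1) hζ)]
  by_cases hall : ∀ ζ ∈ Ioo a z, 0 < q ζ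
  · have hrate : ∫ ζ in a..z, r ζ = (z - a) * (c - N.cap e) := by
      rw [intervalIntegral.integral_congr_Ioo_of_le hz.1 (g := fun _ => c - N.cap e),
        intervalIntegral.integral_const, smul_eq_mul]
      exact fun ζ hζ => hr_pos ζ (hsub (left_mem_Icc.2 hz.1) (right_mem_Icc.2 hz.1) hζ)
        (hall ζ hζ)
    have hqz : q z = q a - (N.cap e - c) * (z - a) := by
      linarith [queueOf_sub_queueOf f e a z]
    rw [max_eq_left (hqz ▸ hf.queueOf_nonneg_s14 (ha.trans hz.1)), hqz]
  · push Not at hall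
    obtain ⟨ζ, hζ, hqζ⟩ := hall
    have hζz : q z ≤ q ζ := by
      linarith [queueOf_sub_queueOf f e ζ z, integral_le_const_mul_sub hζ.2.le
        (f.intervalIntegrable_queue_rate e ζ z) (m := 0) fun η hη =>
          hr_le η (hsub ⟨hζ.1.le, hζ.2.le⟩ (right_mem_Icc.2 hz.1) hη)]
    have hqz : q z = 0 := le_antisymm (hζz.trans hqζ) (hf.queueOf_nonneg_s14 (ha.trans hz.1))
    rw [hqz, max_eq_right (hqz ▸ hlower)]

end QueueDynamics

/-- The reduced dynamics of an IDE in `N₀`: `g` is the inflow rate into `sv`, and `a`, `b` are the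
queues of `vt` and `wx`, which receive the flow of `sv`, `sw` after their travel time `1`. -/
structure N₀Dynamics (g a b : ℝ → ℝ) : Prop where
  initial : ∀ z ∈ Icc (0 : ℝ) 1, a z = 0 ∧ b z = 0
  route_sv : ∀ x y, 1 ≤ x → (∀ ζ ∈ Ioo (x - 1) (y - 1), g ζ = 2) →
    ∀ z ∈ Icc x y, a z = a x + (z - x) ∧ b z = max (b x - (z - x)) 0
  route_sw : ∀ x y, 1 ≤ x → (∀ ζ ∈ Ioo (x - 1) (y - 1), g ζ = 0) →
    ∀ z ∈ Icc x y, a z = max (a x - (z - x)) 0 ∧ b z = b x + (z - x)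
  sv_of_lt : ∀ θ, 0 ≤ θ → a θ < 1 + b θ → g θ = 2
  sw_of_gt : ∀ θ, 0 ≤ θ → 1 + b θ < a θ → g θ = 0

def IsCycleStart (g a b : ℝ → ℝ) (d T : ℝ) : Prop :=
  a T = 1 + d ∧ b T = d ∧ ∀ ζ ∈ Ioo (T - 1) T, g ζ = 2

def IsMidCycle (g a b : ℝ → ℝ) (s U : ℝ) : Prop :=
  a U = 2 * s ∧ b U = 1 ∧ (∀ ζ ∈ Ioo (U - 1) (U - 1 + s), g ζ = 0) ∧
    ∀ ζ ∈ Ioo (U - 1 + s) U, g ζ = 2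

/-- The `k`-th switch away from `v`: `T₀ = 2` and `T_{k+1} = T_k + 3 + d_{k+1}` for the queue
offsets `d_k = 1 - 2⁻ᵏ`. -/
noncomputable def cycleTime (k : ℕ) : ℝ := 4 * k + 1 + (1 / 2) ^ k

theorem one_sub_half_pow_nonneg (k : ℕ) : (0 : ℝ) ≤ 1 - (1 / 2) ^ k := by
  linarith [pow_le_one₀ (n := k) (by norm_num : (0 : ℝ) ≤ 1 / 2) (by norm_num)]

theorem one_sub_half_pow_lt_one (k : ℕ) : 1 - (1 / 2 : ℝ) ^ k < 1 := by
  linarith [pow_pos (by norm_num : (0 : ℝ) < 1 / 2) k]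

theorem le_cycleTime (k : ℕ) : (k : ℝ) ≤ cycleTime k := by
  rw [cycleTime]
  linarith [pow_pos (by norm_num : (0 : ℝ) < 1 / 2) k, (Nat.cast_nonneg k : (0 : ℝ) ≤ k)]

theorem one_le_cycleTime (k : ℕ) : 1 ≤ cycleTime k := by
  rw [cycleTime]
  linarith [pow_pos (by norm_num : (0 : ℝ) < 1 / 2) k, (Nat.cast_nonneg k : (0 : ℝ) ≤ k)]

theorem cycleTime_succ (k : ℕ) :
    cycleTime (k + 1) = cycleTime k + 3 + (1 + (1 - (1 / 2) ^ k)) / 2 := by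
  rw [cycleTime, cycleTime, pow_succ]; push_cast; ring

namespace N₀Dynamics

variable {g a b : ℝ → ℝ} (hD : N₀Dynamics g a b)
include hD

theorem isCycleStart_two : IsCycleStart g a b 0 2 ∧ ∀ z ∈ Icc (0 : ℝ) 2, a z ≤ 1 := by
  have hg₀ : ∀ ζ ∈ Ioo (0 : ℝ) 1, g ζ = 2 := fun ζ hζ => by
    obtain ⟨ha, hb⟩ := hD.initial ζ (Ioo_subset_Icc_self hζ)
    exact hD.sv_of_lt ζ hζ.1.le (by linarith)
  obtain ⟨ha₁, hb₁⟩ := hD.initial 1 (right_mem_Icc.2 zero_le_one)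
  have seg := hD.route_sv 1 2 le_rfl
    fun ζ hζ => hg₀ ζ (Ioo_subset_Ioo (by norm_num) (by norm_num) hζ)
  have ha : ∀ z ∈ Icc (1 : ℝ) 2, a z = z - 1 := fun z hz => by linarith [(seg z hz).1]
  have hb : ∀ z ∈ Icc (1 : ℝ) 2, b z = 0 := fun z hz => by
    rw [(seg z hz).2, hb₁, max_eq_right (by linarith [hz.1])]
  refine ⟨⟨by linarith [ha 2 (by norm_num)], hb 2 (by norm_num), fun ζ hζ => ?_⟩, fun z hz => ?_⟩
  · have hζ' : ζ ∈ Icc (1 : ℝ) 2 := ⟨by linarith [hζ.1], hζ.2.le⟩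
    exact hD.sv_of_lt ζ (by linarith [hζ.1]) (by linarith [ha ζ hζ', hb ζ hζ', hζ.2])
  · rcases le_total z 1 with h | h
    · linarith [(hD.initial z ⟨hz.1, h⟩).1]
    · linarith [ha z ⟨h, hz.2⟩, hz.2]

theorem sv_segment (x y : ℝ) {α β : ℝ} (hx : 1 ≤ x) (hg : ∀ ζ ∈ Ioo (x - 1) (y - 1), g ζ = 2)
    (ha : a x = α) (hb : b x = β) (hβ : y - x ≤ β) :
    ∀ z ∈ Icc x y, a z = α + (z - x) ∧ b z = β - (z - x) := fun z hz => by
  obtain ⟨haz, hbz⟩ := hD.route_sv x y hx hg z hz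
  rw [haz, hbz, ha, hb, max_eq_left (by linarith [hz.2])]
  exact ⟨rfl, rfl⟩

theorem sw_segment (x y : ℝ) {α β : ℝ} (hx : 1 ≤ x) (hg : ∀ ζ ∈ Ioo (x - 1) (y - 1), g ζ = 0)
    (ha : a x = α) (hb : b x = β) (hα : y - x ≤ α) :
    ∀ z ∈ Icc x y, a z = α - (z - x) ∧ b z = β + (z - x) := fun z hz => by
  obtain ⟨haz, hbz⟩ := hD.route_sw x y hx hg z hz
  rw [haz, hbz, ha, hb, max_eq_left (by linarith [hz.2])]
  exact ⟨rfl, rfl⟩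

theorem isMidCycle_of_isCycleStart {d T : ℝ} (hd₀ : 0 ≤ d) (hd₁ : d < 1) (hT : 1 ≤ T)
    (h : IsCycleStart g a b d T) :
    IsMidCycle g a b ((1 + d) / 2) (T + 2) ∧ a (T + 1) = 2 + d ∧
      ∀ z ∈ Icc T (T + 2), a z ≤ 2 + d := by
  obtain ⟨haT, hbT, hg⟩ := h
  have seg₁ := hD.route_sv T (T + 1) hT
    fun ζ hζ => hg ζ (Ioo_subset_Ioo le_rfl (by linarith) hζ)
  have hg₁ : ∀ ζ ∈ Ioo T (T + 1), g ζ = 0 := fun ζ hζ => by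
    obtain ⟨haζ, hbζ⟩ := seg₁ ζ (Ioo_subset_Icc_self hζ)
    refine hD.sw_of_gt ζ (by linarith [hζ.1]) ?_
    rw [haζ, hbζ, haT, hbT]
    linarith [max_lt (show d - (ζ - T) < d + (ζ - T) by linarith [hζ.1])
      (show (0 : ℝ) < d + (ζ - T) by linarith [hζ.1])]
  obtain ⟨ha₁, hb₁⟩ := seg₁ (T + 1) (right_mem_Icc.2 (by linarith))
  rw [hbT, max_eq_right (by linarith)] at hb₁
  have seg₂ := hD.sw_segment (T + 1) (T + 2) (α := 2 + d) (by linarith)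
    (fun ζ hζ => hg₁ ζ (Ioo_subset_Ioo (by linarith) (by linarith) hζ))
    (by linarith) hb₁ (by linarith)
  obtain ⟨ha₂, hb₂⟩ := seg₂ (T + 2) (right_mem_Icc.2 (by linarith))
  refine ⟨⟨by linarith, by linarith, fun ζ hζ => ?_, fun ζ hζ => ?_⟩, by linarith,
    fun z hz => ?_⟩
  · obtain ⟨haζ, hbζ⟩ := seg₂ ζ ⟨by linarith [hζ.1], by linarith [hζ.2]⟩
    exact hD.sw_of_gt ζ (by linarith [hζ.1]) (by linarith [hζ.2])
  · obtain ⟨haζ, hbζ⟩ := seg₂ ζ ⟨by linarith [hζ.1], hζ.2.le⟩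
    exact hD.sv_of_lt ζ (by linarith [hζ.1]) (by linarith [hζ.1])
  · rcases le_total z (T + 1) with h | h
    · linarith [(seg₁ z ⟨hz.1, h⟩).1]
    · linarith [(seg₂ z ⟨h, hz.2⟩).1]

theorem isCycleStart_of_isMidCycle {s U : ℝ} (hs₀ : 0 < s) (hs₁ : s < 1) (hU : 1 ≤ U)
    (h : IsMidCycle g a b s U) :
    IsCycleStart g a b s (U + 1 + s) ∧ ∀ z ∈ Icc U (U + 1 + s), a z ≤ 1 + s := by
  obtain ⟨haU, hbU, hg₀, hg₂⟩ := h
  have seg₃ := hD.sw_segment U (U + s) hU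
    (fun ζ hζ => hg₀ ζ (Ioo_subset_Ioo le_rfl (by linarith) hζ))
    haU hbU (by linarith)
  have hg₃ : ∀ ζ ∈ Ioo U (U + s), g ζ = 2 := fun ζ hζ => by
    obtain ⟨haζ, hbζ⟩ := seg₃ ζ (Ioo_subset_Icc_self hζ)
    exact hD.sv_of_lt ζ (by linarith [hζ.1]) (by linarith [hζ.1])
  obtain ⟨ha₃, hb₃⟩ := seg₃ (U + s) (right_mem_Icc.2 (by linarith))
  have seg₄ := hD.sv_segment (U + s) (U + 1) (α := s) (β := 1 + s) (by linarith)
    (fun ζ hζ => hg₂ ζ (Ioo_subset_Ioo (by linarith) (by linarith) hζ))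
    (by linarith) (by linarith) (by linarith)
  obtain ⟨ha₄, hb₄⟩ := seg₄ (U + 1) (right_mem_Icc.2 (by linarith))
  have seg₅ := hD.sv_segment (U + 1) (U + 1 + s) (α := 1) (β := 2 * s) (by linarith)
    (fun ζ hζ => hg₃ ζ (Ioo_subset_Ioo (by linarith) (by linarith) hζ))
    (by linarith) (by linarith) (by linarith)
  obtain ⟨ha₅, hb₅⟩ := seg₅ (U + 1 + s) (right_mem_Icc.2 (by linarith))
  refine ⟨⟨by linarith, by linarith, fun ζ hζ => hD.sv_of_lt ζ (by linarith [hζ.1]) ?_⟩,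
    fun z hz => ?_⟩
  · rcases le_total ζ (U + 1) with h | h
    · obtain ⟨haζ, hbζ⟩ := seg₄ ζ ⟨by linarith [hζ.1], h⟩
      linarith
    · obtain ⟨haζ, hbζ⟩ := seg₅ ζ ⟨h, hζ.2.le⟩
      linarith [hζ.2]
  · rcases le_total z (U + s) with h₃ | h₃
    · linarith [(seg₃ z ⟨hz.1, h₃⟩).1, hz.1]
    rcases le_total z (U + 1) with h₄ | h₄
    · linarith [(seg₄ z ⟨h₃, h₄⟩).1]
    · linarith [(seg₅ z ⟨h₄, hz.2⟩).1, hz.2]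

theorem isCycleStart_next {d T : ℝ} (hd₀ : 0 ≤ d) (hd₁ : d < 1) (hT : 1 ≤ T)
    (h : IsCycleStart g a b d T) :
    IsCycleStart g a b ((1 + d) / 2) (T + 3 + (1 + d) / 2) ∧ a (T + 1) = 2 + d ∧
      ∀ z ∈ Icc T (T + 3 + (1 + d) / 2), a z ≤ 2 + d := by
  obtain ⟨hmid, hpeak, hbound₁⟩ := hD.isMidCycle_of_isCycleStart hd₀ hd₁ hT h
  obtain ⟨hnext, hbound₂⟩ := hD.isCycleStart_of_isMidCycle (by linarith) (by linarith)
    (by linarith) hmid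
  rw [show T + 2 + 1 + (1 + d) / 2 = T + 3 + (1 + d) / 2 by ring] at hnext hbound₂
  refine ⟨hnext, hpeak, fun z hz => ?_⟩
  rcases le_total z (T + 2) with h | h
  · exact hbound₁ z ⟨hz.1, h⟩
  · linarith [hbound₂ z ⟨h, hz.2⟩]

theorem isCycleStart_cycleTime (k : ℕ) :
    IsCycleStart g a b (1 - (1 / 2) ^ k) (cycleTime k) := by
  induction k with
  | zero => simpa [cycleTime, one_add_one_eq_two] using hD.isCycleStart_two.1
  | succ k ih =>
    have hnext := (hD.isCycleStart_next (one_sub_half_pow_nonneg k) (one_sub_half_pow_lt_one k)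
      (one_le_cycleTime k) ih).1
    rw [cycleTime_succ]
    convert hnext using 1
    rw [pow_succ]; ring

theorem lt_three {θ : ℝ} (hθ : 0 ≤ θ) : a θ < 3 := by
  have hcover : ∀ k : ℕ, ∀ z ∈ Icc 0 (cycleTime k), a z < 3 := by
    intro k
    induction k with
    | zero =>
      intro z hz
      linarith [hD.isCycleStart_two.2 z (by simpa [cycleTime, one_add_one_eq_two] using hz)]
    | succ k ih =>
      intro z hz
      rcases le_total z (cycleTime k) with h | h
      · exact ih z ⟨hz.1, h⟩
      · have hbound := (hD.isCycleStart_next (one_sub_half_pow_nonneg k)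
          (one_sub_half_pow_lt_one k) (one_le_cycleTime k) (hD.isCycleStart_cycleTime k)).2.2
        rw [cycleTime_succ] at hz
        linarith [hbound z ⟨h, hz.2⟩, one_sub_half_pow_lt_one k]
  exact hcover ⌈θ⌉₊ θ ⟨hθ, (Nat.le_ceil θ).trans (le_cycleTime _)⟩

theorem peak (k : ℕ) : a (cycleTime k + 1) = 3 - (1 / 2) ^ k := by
  rw [(hD.isCycleStart_next (one_sub_half_pow_nonneg k) (one_sub_half_pow_lt_one k)
    (one_le_cycleTime k) (hD.isCycleStart_cycleTime k)).2.1]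
  ring

theorem exists_lt_of_lt_three {m : ℝ} (hm : m < 3) (θ₀ : ℝ) : ∃ θ, θ₀ ≤ θ ∧ m < a θ := by
  obtain ⟨k₁, hk₁⟩ := exists_pow_lt_of_lt_one (sub_pos.2 hm) (by norm_num : (1 / 2 : ℝ) < 1)
  set k := max k₁ ⌈θ₀⌉₊
  refine ⟨cycleTime k + 1, ?_, ?_⟩
  · have : θ₀ ≤ k := (Nat.le_ceil θ₀).trans (by exact_mod_cast le_max_right k₁ ⌈θ₀⌉₊)
    linarith [le_cycleTime k]
  · rw [hD.peak k]
    linarith [pow_le_pow_of_le_one (by norm_num : (0 : ℝ) ≤ 1 / 2) (by norm_num)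
      (le_max_left k₁ ⌈θ₀⌉₊)]

end N₀Dynamics

/-- Nodes `s, v, w, x, t` and edges `sv, sw, vt, wx, xt` are both numbered `0, …, 4`. -/
structure IsN₀_s14 (N : Network (Fin 5) (Fin 5)) : Prop where
  tail : N.tail = ![0, 0, 1, 2, 3]
  head : N.head = ![1, 2, 4, 3, 4]
  cap : N.cap = ![2, 2, 1, 1, 1]
  time : ∀ e, N.time e = 1
  sink : N.sink = 4
  inflow : ∀ w θ, N.u w θ = if w = 0 ∧ 0 ≤ θ then 2 else 0

theorem isWalk_N₀_four_iff (L : List (Fin 5)) :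
    IsWalk (![0, 0, 1, 2, 3] : Fin 5 → Fin 5) ![1, 2, 4, 3, 4] 4 4 L ↔ L = [] := by
  rcases L with _ | ⟨e, L⟩
  · simp [IsWalk]
  · simp only [IsWalk, reduceCtorEq, iff_false, not_and]
    fin_cases e <;> simp

theorem isWalk_N₀_three_iff (L : List (Fin 5)) :
    IsWalk (![0, 0, 1, 2, 3] : Fin 5 → Fin 5) ![1, 2, 4, 3, 4] 3 4 L ↔ L = [4] := by
  rcases L with _ | ⟨e, L⟩
  · simp [IsWalk]
  · simp only [IsWalk]
    fin_cases e <;> simp [isWalk_N₀_four_iff]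

theorem isWalk_N₀_two_iff (L : List (Fin 5)) :
    IsWalk (![0, 0, 1, 2, 3] : Fin 5 → Fin 5) ![1, 2, 4, 3, 4] 2 4 L ↔ L = [3, 4] := by
  rcases L with _ | ⟨e, L⟩
  · simp [IsWalk]
  · simp only [IsWalk]
    fin_cases e <;> simp [isWalk_N₀_three_iff]

theorem isWalk_N₀_one_iff (L : List (Fin 5)) :
    IsWalk (![0, 0, 1, 2, 3] : Fin 5 → Fin 5) ![1, 2, 4, 3, 4] 1 4 L ↔ L = [2] := by
  rcases L with _ | ⟨e, L⟩
  · simp [IsWalk]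
  · simp only [IsWalk]
    fin_cases e <;> simp [isWalk_N₀_four_iff]

theorem isWalk_N₀_zero_iff (L : List (Fin 5)) :
    IsWalk (![0, 0, 1, 2, 3] : Fin 5 → Fin 5) ![1, 2, 4, 3, 4] 0 4 L ↔
      L = [0, 2] ∨ L = [1, 3, 4] := by
  rcases L with _ | ⟨e, L⟩
  · simp [IsWalk]
  · simp only [IsWalk]
    fin_cases e <;> simp [isWalk_N₀_one_iff, isWalk_N₀_two_iff]

theorem labelOf_eq_sInf_image {N : Network V E} {P M : E → ℝ → ℝ} {v : V} {θ : ℝ}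
    {S : Set (List E)} (hwalk : ∀ L, IsWalk N.tail N.head v N.sink L ↔ L ∈ S) :
    labelOf N P M v θ = sInf ((fun L => (L.map (ctimeOf N P M · θ)).sum) '' S) := by
  simp only [labelOf, hwalk]
  congr 1
  ext r
  simp [eq_comm]

namespace IsN₀_s14

variable {N : Network (Fin 5) (Fin 5)} (hN : IsN₀_s14 N)
include hN

theorem labelOf_one (P M : Fin 5 → ℝ → ℝ) (θ : ℝ) : labelOf N P M 1 θ = ctimeOf N P M 2 θ := by
  rw [labelOf_eq_sInf_image (S := {[2]}) fun L => by
    rw [hN.tail, hN.head, hN.sink, isWalk_N₀_one_iff, mem_singleton_iff]]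
  simp

theorem labelOf_two (P M : Fin 5 → ℝ → ℝ) (θ : ℝ) :
    labelOf N P M 2 θ = ctimeOf N P M 3 θ + ctimeOf N P M 4 θ := by
  rw [labelOf_eq_sInf_image (S := {[3, 4]}) fun L => by
    rw [hN.tail, hN.head, hN.sink, isWalk_N₀_two_iff, mem_singleton_iff]]
  simp

theorem labelOf_zero (P M : Fin 5 → ℝ → ℝ) (θ : ℝ) : labelOf N P M 0 θ =
    min (ctimeOf N P M 0 θ + ctimeOf N P M 2 θ)
      (ctimeOf N P M 1 θ + (ctimeOf N P M 3 θ + ctimeOf N P M 4 θ)) := by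
  rw [labelOf_eq_sInf_image (S := {[0, 2], [1, 3, 4]}) fun L => by
    rw [hN.tail, hN.head, hN.sink, isWalk_N₀_zero_iff, mem_insert_iff, mem_singleton_iff]]
  simp [image_pair]

variable {f : FlowOverTime N}

theorem flow_conservation (hf : Feasible N f) {θ : ℝ} (hθ : 0 ≤ θ) :
    f.fplus 0 θ + f.fplus 1 θ = 2 ∧ f.fplus 2 θ = f.fminus 0 θ ∧
      f.fplus 3 θ = f.fminus 1 θ ∧ f.fplus 4 θ = f.fminus 3 θ := by
  have h := fun v hv => hf.1 v hv θ hθ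
  simp only [Network.outEdges, Network.inEdges, Finset.sum_filter, Fin.sum_univ_five,
    hN.tail, hN.head, hN.sink, hN.inflow] at h
  refine ⟨?_, ?_, ?_, ?_⟩
  · simpa [hθ] using h 0 (by decide)
  · simpa [sub_eq_zero] using h 1 (by decide)
  · simpa [sub_eq_zero] using h 2 (by decide)
  · simpa [sub_eq_zero] using h 3 (by decide)

theorem fplus_le_cap (hf : Feasible N f) {θ : ℝ} (hθ : 0 ≤ θ) :
    f.fplus 0 θ ≤ N.cap 0 ∧ f.fplus 1 θ ≤ N.cap 1 ∧ f.fplus 4 θ ≤ N.cap 4 := by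
  obtain ⟨hs, -, -, hx⟩ := hN.flow_conservation hf hθ
  have hwx := hf.fminus_le_cap_s14 (e := 3) hθ
  simp only [hN.cap, Matrix.cons_val] at hwx ⊢
  refine ⟨?_, ?_, ?_⟩ <;>
    linarith [f.fplus_nonneg 0 θ, f.fplus_nonneg 1 θ]

theorem queueOf_eq_zero (hf : Feasible N f) {θ : ℝ} (hθ : 0 ≤ θ) :
    queueOf N f.fplus f.fminus 0 θ = 0 ∧ queueOf N f.fplus f.fminus 1 θ = 0 ∧
      queueOf N f.fplus f.fminus 4 θ = 0 :=
  ⟨hf.queueOf_eq_zero_of_fplus_le_cap_s14 (fun _ h => (hN.fplus_le_cap hf h).1) hθ,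
    hf.queueOf_eq_zero_of_fplus_le_cap_s14 (fun _ h => (hN.fplus_le_cap hf h).2.1) hθ,
    hf.queueOf_eq_zero_of_fplus_le_cap_s14 (fun _ h => (hN.fplus_le_cap hf h).2.2) hθ⟩

theorem fplus_eq_zero_of_lt_one (hf : Feasible N f) {θ : ℝ} (hθ₀ : 0 ≤ θ) (hθ₁ : θ < 1) :
    f.fplus 2 θ = 0 ∧ f.fplus 3 θ = 0 := by
  obtain ⟨-, hv, hw, -⟩ := hN.flow_conservation hf hθ₀
  rw [hv, hw, hf.2.2.1 0 θ hθ₀ (by rwa [hN.time]), hf.2.2.1 1 θ hθ₀ (by rwa [hN.time])]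
  exact ⟨rfl, rfl⟩

theorem fplus_eq_of_one_le (hf : Feasible N f) {θ : ℝ} (hθ : 1 ≤ θ) :
    f.fplus 2 θ = f.fplus 0 (θ - 1) ∧ f.fplus 3 θ = 2 - f.fplus 0 (θ - 1) := by
  have hθ' : 0 ≤ θ - 1 := by linarith
  obtain ⟨-, hv, hw, -⟩ := hN.flow_conservation hf (hθ'.trans (sub_le_self θ zero_le_one))
  obtain ⟨hs, -⟩ := hN.flow_conservation hf hθ'
  obtain ⟨hq₀, hq₁, -⟩ := hN.queueOf_eq_zero hf hθ'
  obtain ⟨hc₀, hc₁, -⟩ := hN.fplus_le_cap hf hθ'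
  have hsv := hf.fminus_add_time_eq_fplus_s14 hθ' hq₀ hc₀
  have hsw := hf.fminus_add_time_eq_fplus_s14 hθ' hq₁ hc₁
  rw [hN.time, sub_add_cancel] at hsv hsw
  exact ⟨hv.trans hsv, by linarith⟩

theorem ctimeOf_eq (hf : Feasible N f) {θ : ℝ} (hθ : 0 ≤ θ) :
    ctimeOf N f.fplus f.fminus 0 θ = 1 ∧ ctimeOf N f.fplus f.fminus 1 θ = 1 ∧
      ctimeOf N f.fplus f.fminus 4 θ = 1 ∧
      ctimeOf N f.fplus f.fminus 2 θ = 1 + queueOf N f.fplus f.fminus 2 θ ∧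
      ctimeOf N f.fplus f.fminus 3 θ = 1 + queueOf N f.fplus f.fminus 3 θ := by
  obtain ⟨hq₀, hq₁, hq₄⟩ := hN.queueOf_eq_zero hf hθ
  simp [ctimeOf, hN.time, hN.cap, hq₀, hq₁, hq₄]

theorem fplus_zero_eq_zero_of_lt (hf : IsIDE N f) {θ : ℝ} (hθ : 0 ≤ θ)
    (h : 1 + queueOf N f.fplus f.fminus 3 θ < queueOf N f.fplus f.fminus 2 θ) :
    f.fplus 0 θ = 0 := by
  by_contra hne
  have hactive := hf.2 0 θ hθ ((f.fplus_nonneg 0 θ).lt_of_ne' hne)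
  obtain ⟨c₀, c₁, c₄, c₂, c₃⟩ := hN.ctimeOf_eq hf.1 hθ
  simp only [ActiveOf, hN.tail, hN.head, Matrix.cons_val_zero, hN.labelOf_zero,
    hN.labelOf_one, c₀, c₁, c₂, c₃, c₄] at hactive
  rw [min_eq_right (by linarith)] at hactive
  linarith

theorem fplus_zero_eq_two_of_lt (hf : IsIDE N f) {θ : ℝ} (hθ : 0 ≤ θ)
    (h : queueOf N f.fplus f.fminus 2 θ < 1 + queueOf N f.fplus f.fminus 3 θ) :
    f.fplus 0 θ = 2 := by
  suffices hsw : f.fplus 1 θ = 0 by linarith [(hN.flow_conservation hf.1 hθ).1]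
  by_contra hne
  have hactive := hf.2 1 θ hθ ((f.fplus_nonneg 1 θ).lt_of_ne' hne)
  obtain ⟨c₀, c₁, c₄, c₂, c₃⟩ := hN.ctimeOf_eq hf.1 hθ
  simp only [ActiveOf, hN.tail, hN.head, Matrix.cons_val_one, Matrix.cons_val_zero,
    hN.labelOf_zero, hN.labelOf_two, c₀, c₁, c₂, c₃, c₄] at hactive
  rw [min_eq_left (by linarith)] at hactive
  linarith

theorem n₀Dynamics (hf : IsIDE N f) :
    N₀Dynamics (f.fplus 0) (queueOf N f.fplus f.fminus 2) (queueOf N f.fplus f.fminus 3) := by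
  have hcap₂ : N.cap 2 = 1 := by simp [hN.cap]
  have hcap₃ : N.cap 3 = 1 := by simp [hN.cap]
  have hdelayed : ∀ {x y c}, 1 ≤ x → (∀ ζ ∈ Ioo (x - 1) (y - 1), f.fplus 0 ζ = c) →
      ∀ ζ ∈ Ioo x y, f.fplus 2 ζ = c ∧ f.fplus 3 ζ = 2 - c := fun hx hg ζ hζ => by
    have hg' := hg (ζ - 1) ⟨by linarith [hζ.1], by linarith [hζ.2]⟩
    obtain ⟨hvt, hwx⟩ := hN.fplus_eq_of_one_le hf.1 (hx.trans hζ.1.le)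
    exact ⟨hvt.trans hg', hwx.trans (by rw [hg'])⟩
  refine ⟨fun z hz => ?_, fun x y hx hg z hz => ?_, fun x y hx hg z hz => ?_,
    fun θ hθ h => hN.fplus_zero_eq_two_of_lt hf hθ h,
    fun θ hθ h => hN.fplus_zero_eq_zero_of_lt hf hθ h⟩
  · have hin : ∀ e, e = 2 ∨ e = 3 → ∀ ζ ∈ Ioo (0 : ℝ) 1, f.fplus e ζ = 0 := by
      rintro e (rfl | rfl) ζ hζ
      exacts [(hN.fplus_eq_zero_of_lt_one hf.1 hζ.1.le hζ.2).1,
        (hN.fplus_eq_zero_of_lt_one hf.1 hζ.1.le hζ.2).2]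
    constructor
    · rw [hf.1.queueOf_eq_of_fplus_le_cap le_rfl (hcap₂ ▸ zero_le_one) (hin 2 (by simp)) hz,
        hf.1.queueOf_zero_s14, max_eq_right (by nlinarith [hz.1])]
    · rw [hf.1.queueOf_eq_of_fplus_le_cap le_rfl (hcap₃ ▸ zero_le_one) (hin 3 (by simp)) hz,
        hf.1.queueOf_zero_s14, max_eq_right (by nlinarith [hz.1])]
  · have hin := hdelayed hx hg
    rw [hf.1.queueOf_eq_of_cap_le_fplus (by linarith) (hcap₂ ▸ one_le_two)
        (fun ζ hζ => (hin ζ hζ).1) hz,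
      hf.1.queueOf_eq_of_fplus_le_cap (by linarith) (hcap₃ ▸ zero_le_one)
        (fun ζ hζ => by rw [(hin ζ hζ).2, sub_self]) hz, hcap₂, hcap₃]
    constructor <;> ring_nf
  · have hin := hdelayed hx hg
    rw [hf.1.queueOf_eq_of_fplus_le_cap (by linarith) (hcap₂ ▸ zero_le_one)
        (fun ζ hζ => (hin ζ hζ).1) hz,
      hf.1.queueOf_eq_of_cap_le_fplus (by linarith) (hcap₃ ▸ one_le_two)
        (fun ζ hζ => by rw [(hin ζ hζ).2, sub_zero]) hz, hcap₂, hcap₃]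
    constructor <;> ring_nf

end IsN₀_s14

theorem N₀_two_le_cut_capacity {N : Network (Fin 5) (Fin 5)} (htail : N.tail = ![0, 0, 1, 2, 3])
    (hhead : N.head = ![1, 2, 4, 3, 4]) (hcap : N.cap = ![2, 2, 1, 1, 1])
    (X : Finset (Fin 5)) (h₀ : 0 ∈ X) (h₄ : 4 ∉ X) :
    2 ≤ ∑ e ∈ Finset.univ.filter (fun e => N.tail e ∈ X ∧ N.head e ∉ X), N.cap e := by
  rw [Finset.sum_filter, Fin.sum_univ_five]
  by_cases h₁ : (1 : Fin 5) ∈ X <;> by_cases h₂ : (2 : Fin 5) ∈ X <;>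
    by_cases h₃ : (3 : Fin 5) ∈ X <;> simp [htail, hhead, hcap, h₀, h₁, h₂, h₃, h₄] <;> norm_num

/-- In the five-node network `N₀` (nodes `s=0, v=1, w=2, x=3, t=4`,
edges `sv=0, sw=1, vt=2, wx=3, xt=4`, all travel times `1`, capacities `2,2,1,1,1`,
sink `t`) with everlasting constant inflow rate `2` at `s`: (a) the inflow rate is at
most the capacity of every `s`-`t` cut; and yet (b) no IDE flow ever reaches a periodic
state, and in particular no IDE flow reaches a steady state. -/
theorem ide_no_periodic_state
    (N : Network (Fin 5) (Fin 5))
    (htail : N.tail = ![0, 0, 1, 2, 3])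
    (hhead : N.head = ![1, 2, 4, 3, 4])
    (hcap : N.cap = ![2, 2, 1, 1, 1])
    (htime : ∀ e, N.time e = 1)
    (hsink : N.sink = 4)
    (hu : ∀ w θ, N.u w θ = if w = 0 ∧ 0 ≤ θ then 2 else 0) :
    (∀ X : Finset (Fin 5), (0 : Fin 5) ∈ X → (4 : Fin 5) ∉ X →
      2 ≤ ∑ e ∈ Finset.univ.filter (fun e => N.tail e ∈ X ∧ N.head e ∉ X), N.cap e) ∧
    ∀ f : FlowOverTime N, IsIDE N f →
      (¬ ∃ θt : ℝ, 0 ≤ θt ∧ ∃ p : ℝ, 0 < p ∧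
        ∀ e, ∀ θ : ℝ, θt ≤ θ → ∀ k : ℕ,
          queueOf N f.fplus f.fminus e (θ + k * p) = queueOf N f.fplus f.fminus e θ) ∧
      (¬ ∃ θt : ℝ, 0 ≤ θt ∧
        ∀ e, ∀ θ : ℝ, θt ≤ θ →
          queueOf N f.fplus f.fminus e θ = queueOf N f.fplus f.fminus e θt) := by
  have hN : IsN₀_s14 N := ⟨htail, hhead, hcap, htime, hsink, hu⟩
  refine ⟨N₀_two_le_cut_capacity htail hhead hcap, fun f hf => ?_⟩
  have hD := hN.n₀Dynamics hf
  have hperiodic : ¬ ∃ θt : ℝ, 0 ≤ θt ∧ ∃ p : ℝ, 0 < p ∧ ∀ e, ∀ θ : ℝ, θt ≤ θ → ∀ k : ℕ,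
      queueOf N f.fplus f.fminus e (θ + k * p) = queueOf N f.fplus f.fminus e θ := by
    rintro ⟨θt, hθt, p, hp, hper⟩
    obtain ⟨θm, hθm, hmax⟩ := (continuous_queueOf f 2).exists_forall_le_of_periodic hp (hper 2)
    obtain ⟨θ, hθ, hlt⟩ := hD.exists_lt_of_lt_three (hD.lt_three (hθt.trans hθm)) θt
    exact hlt.not_ge (hmax θ hθ)
  refine ⟨hperiodic, fun ⟨θt, hθt, hconst⟩ => hperiodic ⟨θt, hθt, 1, one_pos, fun e θ hθ k => ?_⟩⟩
  rw [hconst e θ hθ, hconst e _ (le_add_of_le_of_nonneg hθ (by positivity))]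
end

section
/- Let p ≥ 1 be an integer, let b ∈ ℚ with b ≥ 0, and for each i ∈ {1,…,p} let α_i ∈ ℚ with α_i > 0, β_i ∈ ℚ, and γ_i ∈ ℚ with γ_i ≥ 0 and define k_i : ℝ≥0 → ℝ by k_i(z) = β_i for z ≤ γ_i and k_i(z) = β_i + (z − γ_i)/α_i for z ≥ γ_i. Then there exist rational numbers z_1, …, z_p ≥ 0 with Σ_{i=1}^p z_i = b and a rational number λ such that for every i: if z_i > 0 then k_i(z_i) = λ, and if z_i = 0 then k_i(0) ≥ λ. (In other words, the water-filling distribution problem arising in the IDE extension step admits a rational solution whenever its input data are rational.) -/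
/-!
For a multiplier `l`, the flows `z ≥ 0` into edge `i` satisfying the optimality conditions at
level `l` form the interval `[lowerFlow_i l, upperFlow_i l]`; it is a single point unless
`l = β_i`, where it is `[0, γ_i]`. So it suffices to find `l` with
`∑ lowerFlow_i l ≤ b ≤ ∑ upperFlow_i l` and then interpolate linearly inside the box.
Such an `l` is found by a finite search: let `l₀` be the largest breakpoint `β_j` with
`∑ lowerFlow_i β_j ≤ b`. Either `b ≤ ∑ upperFlow_i l₀`, or the affine equation for the edges
with `β_i ≤ l₀` has its root `l` before the next breakpoint (otherwise that breakpoint would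
have been chosen). All quantities stay in the field generated by the data, hence are rational.
-/

open Finset

section Waterfilling

variable {𝕜 : Type*} [Field 𝕜] [LinearOrder 𝕜]

def lowerFlow (a β γ l : 𝕜) : 𝕜 := if β < l then γ + a * (l - β) else 0

def upperFlow (a β γ l : 𝕜) : 𝕜 := if β ≤ l then γ + a * (l - β) else 0

lemma sum_lowerFlow_eq_of_gap {ι : Type*} [Fintype ι] (α β γ : ι → 𝕜) {l₀ l : 𝕜} (hl : l₀ < l)
    (hgap : ∀ i, β i ≤ l₀ ∨ l ≤ β i) :
    ∑ i, lowerFlow (α i) (β i) (γ i) l =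
      ∑ i, upperFlow (α i) (β i) (γ i) l₀ + (∑ i with β i ≤ l₀, α i) * (l - l₀) := by
  rw [sum_filter, sum_mul, ← sum_add_distrib]
  refine sum_congr rfl fun i _ => ?_
  unfold lowerFlow upperFlow
  rcases hgap i with h | h
  · rw [if_pos (h.trans_lt hl), if_pos h, if_pos h]; ring
  · have h₀ : ¬β i ≤ l₀ := not_le.mpr (hl.trans_le h)
    rw [if_neg (not_lt.mpr h), if_neg h₀, if_neg h₀]
    ring

lemma lowerFlow_le_upperFlow {a β γ : 𝕜} (hγ : 0 ≤ γ) (l : 𝕜) :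
    lowerFlow a β γ l ≤ upperFlow a β γ l := by
  unfold lowerFlow upperFlow
  rcases lt_trichotomy β l with hlt | rfl | hgt
  · simp [hlt, hlt.le]
  · simpa using hγ
  · simp [not_lt.mpr hgt.le, not_le.mpr hgt]

variable [IsStrictOrderedRing 𝕜]

lemma kkt_of_lowerFlow_le_of_le_upperFlow {a β γ l z : 𝕜} (ha : 0 < a) (hγ : 0 ≤ γ)
    (hlo : lowerFlow a β γ l ≤ z) (hhi : z ≤ upperFlow a β γ l) :
    0 ≤ z ∧ (0 < z → (if z ≤ γ then β else β + (z - γ) / a) = l) ∧ (z = 0 → l ≤ β) := by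
  rw [lowerFlow] at hlo
  rw [upperFlow] at hhi
  rcases lt_trichotomy β l with hlt | rfl | hgt
  · have hz : z = γ + a * (l - β) :=
      le_antisymm (by simpa [hlt.le] using hhi) (by simpa [hlt] using hlo)
    have hγz : γ < z := by rw [hz]; nlinarith
    refine ⟨hγ.trans hγz.le, fun _ => ?_, fun h0 => absurd (h0 ▸ hγz) (not_lt.mpr hγ)⟩
    rw [if_neg (not_le.mpr hγz), hz, add_sub_cancel_left, mul_div_cancel_left₀ _ ha.ne']
    ring
  · simp only [lt_irrefl, if_false, le_refl, if_true, sub_self, mul_zero, add_zero] at hlo hhi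
    exact ⟨hlo, fun _ => by rw [if_pos hhi], fun _ => le_rfl⟩
  · have hz : z = 0 := le_antisymm (by simpa [not_le.mpr hgt] using hhi)
      (by simpa [not_lt.mpr hgt.le] using hlo)
    exact ⟨hz.ge, fun h => absurd hz h.ne', fun _ => hgt.le⟩

lemma exists_sum_eq_of_sum_le_of_le_sum {ι : Type*} [Fintype ι] {lo hi : ι → 𝕜} {b : 𝕜}
    (hle : ∀ i, lo i ≤ hi i) (hlo : ∑ i, lo i ≤ b) (hhi : b ≤ ∑ i, hi i) :
    ∃ z : ι → 𝕜, (∀ i, lo i ≤ z i ∧ z i ≤ hi i) ∧ ∑ i, z i = b := by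
  set t := (b - ∑ i, lo i) / (∑ i, hi i - ∑ i, lo i)
  have ht₀ : 0 ≤ t := div_nonneg (by linarith) (by linarith)
  have ht₁ : t ≤ 1 := div_le_one_of_le₀ (by linarith) (by linarith)
  refine ⟨fun i => lo i + t * (hi i - lo i), fun i => ⟨?_, ?_⟩, ?_⟩
  · nlinarith [hle i]
  · nlinarith [hle i]
  · rw [sum_add_distrib, ← mul_sum, sum_sub_distrib]
    rcases eq_or_ne (∑ i, hi i - ∑ i, lo i) 0 with h | h
    · rw [h, mul_zero]; linarith
    · rw [div_mul_cancel₀ _ h]; ring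

variable {ι : Type*} [Fintype ι] (α β γ : ι → 𝕜)

lemma exists_sum_lowerFlow_le_le_sum_upperFlow [Nonempty ι] (hα : ∀ i, 0 < α i)
    (hγ : ∀ i, 0 ≤ γ i) {b : 𝕜} (hb : 0 ≤ b) :
    ∃ l : 𝕜, ∑ i, lowerFlow (α i) (β i) (γ i) l ≤ b ∧ b ≤ ∑ i, upperFlow (α i) (β i) (γ i) l := by
  set Lo := fun l => ∑ i, lowerFlow (α i) (β i) (γ i) l
  set Hi := fun l => ∑ i, upperFlow (α i) (β i) (γ i) l
  have hfeasible : (univ.filter fun j => Lo (β j) ≤ b).Nonempty := by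
    obtain ⟨j, -, hj⟩ := exists_min_image univ β univ_nonempty
    refine ⟨j, mem_filter.mpr ⟨mem_univ j, ?_⟩⟩
    simpa [Lo, lowerFlow, not_lt.mpr (hj _ (mem_univ _))] using hb
  obtain ⟨j, hjS, hjmax⟩ := exists_max_image _ β hfeasible
  by_cases hup : b ≤ Hi (β j)
  · exact ⟨β j, (mem_filter.mp hjS).2, hup⟩
  set A := ∑ i with β i ≤ β j, α i
  have hA : 0 < A := sum_pos' (fun i _ => (hα i).le) ⟨j, by simp, hα j⟩
  set l := β j + (b - Hi (β j)) / A
  have hjl : β j < l := lt_add_of_pos_right _ (div_pos (by linarith) hA)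
  have hroot : Hi (β j) + A * (l - β j) = b := by
    rw [add_sub_cancel_left, mul_div_cancel₀ _ hA.ne']; ring
  have hgap : ∀ i, β i ≤ β j ∨ l ≤ β i := by
    by_contra! hcut
    obtain ⟨i₀, hi₀, hi₀l⟩ := hcut
    obtain ⟨i, hi, hmin⟩ := exists_min_image (univ.filter fun i => β j < β i) β
      ⟨i₀, mem_filter.mpr ⟨mem_univ _, hi₀⟩⟩
    have hji : β j < β i := (mem_filter.mp hi).2
    have hil : β i < l := (hmin i₀ (mem_filter.mpr ⟨mem_univ _, hi₀⟩)).trans_lt hi₀l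
    have hgap' : ∀ k, β k ≤ β j ∨ β i ≤ β k := fun k =>
      (le_or_gt (β k) (β j)).imp_right fun h => hmin k (mem_filter.mpr ⟨mem_univ _, h⟩)
    have : Lo (β i) ≤ b := by
      rw [← hroot, show Lo (β i) = _ from sum_lowerFlow_eq_of_gap α β γ hji hgap']
      nlinarith
    exact absurd (hjmax i (mem_filter.mpr ⟨mem_univ _, this⟩)) (not_le.mpr hji)
  have hlow : Lo l = b := by
    rw [← hroot, show Lo l = _ from sum_lowerFlow_eq_of_gap α β γ hjl hgap, mul_comm]
  exact ⟨l, hlow.le, hlow ▸ sum_le_sum fun i _ => lowerFlow_le_upperFlow (hγ i) l⟩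

end Waterfilling

/-- The water-filling distribution problem with rational data admits a
rational solution: given `b ≥ 0` and, for `i ∈ {1,…,p}`, rational `α_i > 0`, `β_i` and
`γ_i ≥ 0` defining `k_i(z) = β_i` for `z ≤ γ_i` and `k_i(z) = β_i + (z−γ_i)/α_i` for
`z ≥ γ_i`, there are rational `z_1,…,z_p ≥ 0` summing to `b` and a rational `λ` such that
`k_i(z_i) = λ` whenever `z_i > 0` and `k_i(0) ≥ λ` whenever `z_i = 0`. -/
theorem waterfilling_rational_solution
    (p : ℕ) (hp : 1 ≤ p) (b : ℚ) (hb : 0 ≤ b)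
    (α β γ : Fin p → ℚ) (hα : ∀ i, 0 < α i) (hγ : ∀ i, 0 ≤ γ i) :
    ∃ (z : Fin p → ℚ) (lam : ℚ),
      (∀ i, 0 ≤ z i) ∧ (∑ i, z i = b) ∧
      ∀ i,
        (0 < z i →
          (if z i ≤ γ i then β i else β i + (z i - γ i) / α i) = lam) ∧
        (z i = 0 →
          lam ≤ (if (0:ℚ) ≤ γ i then β i else β i + (0 - γ i) / α i)) := by
  have : Nonempty (Fin p) := ⟨⟨0, hp⟩⟩
  obtain ⟨lam, hlo, hhi⟩ := exists_sum_lowerFlow_le_le_sum_upperFlow α β γ hα hγ hb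
  obtain ⟨z, hz, hsum⟩ :=
    exists_sum_eq_of_sum_le_of_le_sum (fun i => lowerFlow_le_upperFlow (hγ i) lam) hlo hhi
  have hopt i := kkt_of_lowerFlow_le_of_le_upperFlow (hα i) (hγ i) (hz i).1 (hz i).2
  refine ⟨z, lam, fun i => (hopt i).1, hsum, fun i => ⟨(hopt i).2.1, fun h0 => ?_⟩⟩
  rw [if_pos (hγ i)]
  exact (hopt i).2.2 h0
end
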